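/- arXiv:1709.00696 — 9 statements merged into one kernel-verified Lean document; each statement's English description precedes it below -/
import Mathlib

section
/- Let K be a field and D ∈ K a non-square. The set P_K = K ∪ {α} (α a formal extra element, e.g. realized as Option K) equipped with the product ⊙ defined by a ⊙ b = (D + ab)/(a + b) when a + b ≠ 0, a ⊙ b = α when a + b = 0, and α ⊙ a = a ⊙ α = a, is a commutative group with identity α, in which the inverse of a ∈ K is −a. -/
/- The product `⊙` on the parameter set `P_K = K ∪ {α}`, realized as `Option K`
(`none` plays the role of `α`): `a ⊙ b = (D + a b)/(a + b)` if `a + b ≠ 0`,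
`a ⊙ b = α` if `a + b = 0`, and `α ⊙ a = a ⊙ α = a`. -/
open Classical in

noncomputable def paraMul {K : Type*} [Field K] (D : K) : Option K → Option K → Option K
  | some a, some b => if a + b = 0 then none else some ((D + a * b) / (a + b))
  | none, x => x
  | some a, none => some a

/-- For a field `K` and a non-square `D ∈ K`, the set
`P_K = K ∪ {α}` with the product `⊙` is a commutative group with identity `α`,
in which the inverse of `a ∈ K` is `−a`. -/
theorem paraMul_commGroup {K : Type*} [Field K] (D : K) (hD : ∀ c : K, c ^ 2 ≠ D) :
    (∀ a b c : Option K, paraMul D (paraMul D a b) c = paraMul D a (paraMul D b c)) ∧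
    (∀ a b : Option K, paraMul D a b = paraMul D b a) ∧
    (∀ a : Option K, paraMul D none a = a ∧ paraMul D a none = a) ∧
    (∀ a : K, paraMul D (some a) (some (-a)) = none) := by
  refine ⟨?_, ?_, ?_, ?_⟩
  · rintro (_|a) (_|b) (_|c)
    · rfl
    · rfl
    · rfl
    · rfl
    · rfl
    · rfl
    · by_cases hab : a + b = 0 <;> simp [paraMul, hab]
    · simp only [paraMul]
      by_cases hab : a + b = 0 <;> by_cases hbc : b + c = 0
      · have hac : a = c := by linear_combination hab - hbc
        rw [if_pos hab, if_pos hbc]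
        simp [paraMul, hac]
      · have ha : a = -b := by linear_combination hab
        subst ha
        simp only [if_pos hab, if_neg hbc, paraMul]
        have hden : -b + (D + b * c) / (b + c) ≠ 0 := by
          intro h
          apply hD b
          field_simp at h
          linear_combination -h
        rw [if_neg hden]
        congr 1
        rw [eq_div_iff hden]
        field_simp
        ring
      · have hc : c = -b := by linear_combination hbc
        subst hc
        simp only [if_neg hab, if_pos hbc, paraMul]
        have hden : (D + a * b) / (a + b) + -b ≠ 0 := by
          intro h
          apply hD b
          field_simp at h
          linear_combination -h
        rw [if_neg hden]
        congr 1
        rw [div_eq_iff hden]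
        field_simp
        ring
      · simp only [if_neg hab, if_neg hbc, paraMul]
        by_cases h1 : (D + a * b) / (a + b) + c = 0
        · have h2 : a + (D + b * c) / (b + c) = 0 := by
            field_simp at h1 ⊢
            linear_combination h1
          rw [if_pos h1, if_pos h2]
        · have h2 : a + (D + b * c) / (b + c) ≠ 0 := by
            intro h
            apply h1
            field_simp at h ⊢
            linear_combination h
          rw [if_neg h1, if_neg h2]
          congr 1
          rw [div_eq_div_iff h1 h2]
          field_simp
          ring
  · rintro (_|a) (_|b) <;> simp only [paraMul]
    rw [add_comm b a, mul_comm b a]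
  · rintro (_|a) <;> simp [paraMul]
  · intro a
    simp [paraMul]
end

section
/- Let p be an odd prime and D ∈ ℤ/pℤ a non-square. Then the group (H_{D,ℤ/pℤ}, ⊗) has exactly p + 1 elements and is cyclic: there exists a point (a,b) ∈ H_{D,ℤ/pℤ} such that every element of H_{D,ℤ/pℤ} is an ⊗-power of (a,b). -/
/-- The Brahmagupta (Pell) product on `R × R`. -/
def pellMul {R : Type*} [CommRing R] (D : R) (P Q : R × R) : R × R :=
  (P.1 * Q.1 + D * P.2 * Q.2, P.2 * Q.1 + P.1 * Q.2)

/-- `n`-th power with respect to the Brahmagupta product (identity `(1,0)`). -/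
def pellPow {R : Type*} [CommRing R] (D : R) (P : R × R) : ℕ → R × R
  | 0 => (1, 0)
  | n + 1 => pellMul D P (pellPow D P n)

/-- The Pell conic `H_{D,R} = {(x, y) : x² − D y² = 1}`. -/
def pellConic {R : Type*} [CommRing R] (D : R) : Set (R × R) :=
  {P | P.1 ^ 2 - D * P.2 ^ 2 = 1}

/-!
Under `(x, y) ↦ x + y√D` the Brahmagupta product becomes multiplication in the quadratic
extension `L = F(√D) = QuadraticAlgebra F D 0`, and the Pell conic becomes the set
of elements of norm one. Over a field with `q` elements the Frobenius `z ↦ z ^ q` is the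
conjugation of `L / F`, because `√D ^ q = D ^ ((q - 1) / 2) • √D = -√D` by Euler's criterion;
hence the norm of `z` is `z ^ (q + 1)`. So the Pell conic is the group of `(q + 1)`-th roots of
unity in the cyclic group `Lˣ` of order `q² - 1`: it is generated by one primitive root and has
`q + 1` elements.
-/

open QuadraticAlgebra Polynomial

section CommRing

variable {R : Type*} [CommRing R] (D : R)

theorem pellMul_equivProd (z w : QuadraticAlgebra R D 0) :
    pellMul D (equivProd D 0 z) (equivProd D 0 w) = equivProd D 0 (z * w) := by
  ext <;> simp only [pellMul, equivProd, Equiv.coe_fn_mk, re_mul, im_mul]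
  ring

theorem pellPow_equivProd (z : QuadraticAlgebra R D 0) (n : ℕ) :
    pellPow D (equivProd D 0 z) n = equivProd D 0 (z ^ n) := by
  induction n with
  | zero => rfl
  | succ n ih => rw [pellPow, ih, pellMul_equivProd, pow_succ']

theorem equivProd_mem_pellConic_iff (z : QuadraticAlgebra R D 0) :
    equivProd D 0 z ∈ pellConic D ↔ norm z = 1 := by
  simp only [pellConic, Set.mem_ofPred_eq, norm_def, equivProd, Equiv.coe_fn_mk]
  ring_nf

end CommRing

namespace FiniteField

variable {F : Type*} [Field F] [Fintype F] {a : F}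

theorem ringChar_ne_two_of_not_isSquare (ha : ¬IsSquare a) : ringChar F ≠ 2 :=
  fun h => ha (isSquare_of_char_two h a)

theorem pow_card_div_two_eq_neg_one_of_not_isSquare (ha : ¬IsSquare a) :
    a ^ (Fintype.card F / 2) = -1 := by
  have hF := ringChar_ne_two_of_not_isSquare ha
  have ha0 : a ≠ 0 := by rintro rfl; exact ha ⟨0, by simp⟩
  exact (pow_dichotomy hF ha0).resolve_left fun h => ha ((isSquare_iff hF ha0).mpr h)

theorem exists_isPrimitiveRoot_of_dvd_card_sub_one {L : Type*} [Field L] [Finite L] {n : ℕ}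
    (hn : n ∣ Nat.card L - 1) : ∃ ζ : L, IsPrimitiveRoot ζ n := by
  obtain ⟨g, hg⟩ := IsCyclic.exists_ofOrder_eq_natCard (α := Lˣ)
  obtain ⟨k, hk⟩ := hn
  refine ⟨((g ^ k : Lˣ) : L), IsPrimitiveRoot.coe_units_iff.mpr ?_⟩
  refine (IsPrimitiveRoot.orderOf g).pow (orderOf_pos g) ?_
  rw [hg, Nat.card_units, hk, mul_comm]

end FiniteField

theorem QuadraticAlgebra.fact_of_not_isSquare {K : Type*} [Field K] {D : K}
    (hD : ¬IsSquare D) : Fact (∀ r : K, r ^ 2 ≠ D + 0 * r) :=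
  ⟨fun r hr => hD ⟨r, by linear_combination -hr⟩⟩

section FiniteField

variable {F : Type*} [Field F] [Fintype F] {D : F}

local notation "q" => Fintype.card F

namespace QuadraticAlgebra

instance : Finite (QuadraticAlgebra F D 0) := .of_equiv _ (equivProd D 0).symm

theorem natCard_eq_card_sq : Nat.card (QuadraticAlgebra F D 0) = q ^ 2 := by
  rw [Nat.card_congr (equivProd D 0), Nat.card_prod, Nat.card_eq_fintype_card, sq]

theorem omega_pow_card (hD : ¬IsSquare D) : (ω : QuadraticAlgebra F D 0) ^ q = -ω := by
  have hq : q = 2 * (q / 2) + 1 := by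
    have := FiniteField.odd_card_of_char_ne_two (FiniteField.ringChar_ne_two_of_not_isSquare hD)
    omega
  rw [hq, pow_succ, pow_mul, sq, omega_mul_omega_eq_algebraMap, map_zero, zero_mul, add_zero,
    ← map_pow, FiniteField.pow_card_div_two_eq_neg_one_of_not_isSquare hD, map_neg, map_one,
    neg_one_mul]

theorem pow_card_eq_star (hD : ¬IsSquare D) (z : QuadraticAlgebra F D 0) : z ^ q = star z :=
  calc z ^ q = FiniteField.frobeniusAlgHom F _ (algebraMap F _ z.re + z.im • ω) := by
        rw [← mk_eq_add_smul_omega]; rfl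
    _ = algebraMap F _ z.re + z.im • -ω := by
        rw [map_add, AlgHom.commutes, map_smul, FiniteField.frobeniusAlgHom_apply,
          omega_pow_card hD]
    _ = star z := by ext <;> simp

theorem norm_eq_one_iff_pow_card_add_one (hD : ¬IsSquare D) (z : QuadraticAlgebra F D 0) :
    norm z = 1 ↔ z ^ (q + 1) = 1 := by
  rw [pow_succ', pow_card_eq_star hD, ← algebraMap_norm_eq_mul_star,
    ← (algebraMap_injective (a := D) (b := 0)).eq_iff, map_one]

theorem exists_isPrimitiveRoot_card_add_one (hD : ¬IsSquare D) :
    ∃ ζ : QuadraticAlgebra F D 0, IsPrimitiveRoot ζ (q + 1) := by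
  have := fact_of_not_isSquare hD
  refine FiniteField.exists_isPrimitiveRoot_of_dvd_card_sub_one ⟨q - 1, ?_⟩
  rw [natCard_eq_card_sq, ← one_pow 2, Nat.sq_sub_sq, one_pow]

end QuadraticAlgebra

theorem equivProd_mem_pellConic_iff_pow_card_add_one (hD : ¬IsSquare D)
    (z : QuadraticAlgebra F D 0) : equivProd D 0 z ∈ pellConic D ↔ z ^ (q + 1) = 1 := by
  rw [equivProd_mem_pellConic_iff, norm_eq_one_iff_pow_card_add_one hD]

theorem natCard_pellConic_of_not_isSquare (hD : ¬IsSquare D) :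
    Nat.card (pellConic D) = q + 1 := by
  have := fact_of_not_isSquare hD
  obtain ⟨ζ, hζ⟩ := exists_isPrimitiveRoot_card_add_one hD
  rw [← hζ.card_nthRootsFinset, ← Nat.card_eq_finsetCard]
  refine Nat.card_congr ((equivProd D 0).subtypeEquiv fun z => ?_).symm
  rw [mem_nthRootsFinset (Nat.succ_pos _), equivProd_mem_pellConic_iff_pow_card_add_one hD]

theorem exists_pellPow_generator_of_not_isSquare (hD : ¬IsSquare D) :
    ∃ G ∈ pellConic D, ∀ P ∈ pellConic D, ∃ n : ℕ, pellPow D G n = P := by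
  have := fact_of_not_isSquare hD
  obtain ⟨ζ, hζ⟩ := exists_isPrimitiveRoot_card_add_one hD
  refine ⟨equivProd D 0 ζ, (equivProd_mem_pellConic_iff_pow_card_add_one hD ζ).mpr hζ.pow_eq_one,
    fun P hP => ?_⟩
  obtain ⟨z, rfl⟩ := (equivProd D 0).surjective P
  obtain ⟨n, -, hn⟩ :=
    hζ.eq_pow_of_pow_eq_one ((equivProd_mem_pellConic_iff_pow_card_add_one hD z).mp hP)
  exact ⟨n, by rw [pellPow_equivProd, hn]⟩

end FiniteField

theorem pellConic_card_cyclic_general (p : ℕ) (hp : p.Prime) (D : ZMod p)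
    (hD : ∀ c : ZMod p, c ^ 2 ≠ D) :
    Nat.card (pellConic D) = p + 1 ∧
    ∃ G ∈ pellConic D, ∀ P ∈ pellConic D, ∃ n : ℕ, pellPow D G n = P := by
  have : Fact p.Prime := ⟨hp⟩
  have hD' : ¬IsSquare D := fun ⟨c, hc⟩ => hD c (by rw [hc, sq])
  exact ⟨by rw [natCard_pellConic_of_not_isSquare hD', ZMod.card],
    exists_pellPow_generator_of_not_isSquare hD'⟩

/-- For an odd prime `p` and a non-square `D ∈ ℤ/pℤ`, the group
`(H_{D,ℤ/pℤ}, ⊗)` has exactly `p + 1` elements and is cyclic. -/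
theorem pellConic_card_cyclic (p : ℕ) (hp : p.Prime) (hp2 : p ≠ 2) (D : ZMod p)
    (hD : ∀ c : ZMod p, c ^ 2 ≠ D) :
    Nat.card (pellConic D) = p + 1 ∧
    ∃ G ∈ pellConic D, ∀ P ∈ pellConic D, ∃ n : ℕ, pellPow D G n = P :=
  pellConic_card_cyclic_general p hp D hD
end

section
/- Let p be an odd prime and D ∈ ℤ/pℤ a non-square. Then for every (x,y) ∈ H_{D,ℤ/pℤ}, the (p+2)-nd ⊗-power of (x,y) equals (x,y), i.e. (x,y)^{⊗(p+2)} = (x,y). -/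
namespace PellAux

variable {R : Type*} [CommRing R]

/-- matrix model -/
def J (D : R) : Matrix (Fin 2) (Fin 2) R := !![0, D; 1, 0]

def emb (D : R) (P : R × R) : Matrix (Fin 2) (Fin 2) R := P.1 • 1 + P.2 • J D

lemma emb_apply00 (D : R) (P : R × R) : emb D P 0 0 = P.1 := by
  simp [emb, J, Matrix.one_apply]

lemma emb_apply10 (D : R) (P : R × R) : emb D P 1 0 = P.2 := by
  simp [emb, J, Matrix.one_apply]

lemma emb_injective (D : R) : Function.Injective (emb D) := by
  intro P Q h
  have h1 := congrArg (fun M => M 0 0) h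
  have h2 := congrArg (fun M => M 1 0) h
  simp only [emb_apply00, emb_apply10] at h1 h2
  exact Prod.ext h1 h2

lemma emb_mul (D : R) (P Q : R × R) :
    emb D (pellMul D P Q) = emb D P * emb D Q := by
  ext i j
  fin_cases i <;> fin_cases j <;>
    simp [emb, J, pellMul, Matrix.mul_apply, Fin.sum_univ_two, Matrix.one_apply] <;> ring

lemma emb_one (D : R) : emb D ((1 : R), (0 : R)) = 1 := by
  simp [emb]

lemma emb_pow (D : R) (P : R × R) (n : ℕ) :
    emb D (pellPow D P n) = (emb D P) ^ n := by
  induction n with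
  | zero => simpa [pellPow] using emb_one D
  | succ n ih => rw [pellPow, emb_mul, ih, pow_succ']

lemma J_sq (D : R) : (J D) ^ 2 = D • 1 := by
  ext i j
  fin_cases i <;> fin_cases j <;>
    simp [J, pow_two, Matrix.mul_apply, Fin.sum_univ_two, Matrix.one_apply]

end PellAux

/-- For an odd prime `p` and a non-square `D ∈ ℤ/pℤ`, every point of the
Pell conic satisfies `(x, y)^{⊗(p+2)} = (x, y)`. -/
theorem pellPow_p_add_two (p : ℕ) (hp : p.Prime) (hp2 : p ≠ 2) (D : ZMod p)
    (hD : ∀ c : ZMod p, c ^ 2 ≠ D) :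
    ∀ P ∈ pellConic D, pellPow D P (p + 2) = P := by
  haveI : Fact p.Prime := ⟨hp⟩
  intro P hP
  obtain ⟨x, y⟩ := P
  have hnorm : x ^ 2 - D * y ^ 2 = 1 := hP
  have hD0 : D ≠ 0 := fun h => hD 0 (by simp [h])
  have hodd : p % 2 = 1 := Nat.odd_iff.mp (hp.odd_of_ne_two hp2)
  -- Euler's criterion for a non-square
  have hDsq : D ^ (p / 2) = -1 := by
    have hne : D ^ (p / 2) ≠ 1 := by
      intro h
      obtain ⟨c, hc⟩ := (ZMod.euler_criterion p hD0).mpr h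
      exact hD c (by rw [sq]; exact hc.symm)
    have hsq : D ^ (p / 2) * D ^ (p / 2) = 1 := by
      rw [← pow_add]
      have h2 : p / 2 + p / 2 = p - 1 := by omega
      rw [h2]
      exact ZMod.pow_card_sub_one_eq_one hD0
    rcases mul_self_eq_one_iff.mp hsq with h | h
    · exact absurd h hne
    · exact h
  set M := Matrix (Fin 2) (Fin 2) (ZMod p)
  haveI : CharP M p := Matrix.charP p
  set A : M := PellAux.emb D (x, y) with hA
  -- Frobenius: A ^ p = emb D (x, -y)
  have hJp : PellAux.J D ^ p = (-1 : ZMod p) • PellAux.J D := by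
    have hpe : p = 2 * (p / 2) + 1 := by omega
    calc PellAux.J D ^ p = PellAux.J D ^ (2 * (p / 2) + 1) := by rw [← hpe]
      _ = (PellAux.J D ^ 2) ^ (p / 2) * PellAux.J D := by
            rw [pow_succ, pow_mul]
      _ = (-1 : ZMod p) • PellAux.J D := by
            rw [PellAux.J_sq, smul_pow, one_pow, smul_mul_assoc, one_mul, hDsq]
  have hcomm : Commute (x • (1 : M)) (y • PellAux.J D) :=
    ((Commute.one_left (PellAux.J D)).smul_left x).smul_right y
  have hfrob : A ^ p = PellAux.emb D (x, -y) := by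
    have h1 : A = x • (1 : M) + y • PellAux.J D := rfl
    have h2 : PellAux.emb D (x, -y) = x • (1 : M) + (-y) • PellAux.J D := rfl
    rw [h1, h2, add_pow_char_of_commute p hcomm, smul_pow, smul_pow,
      one_pow, ZMod.pow_card, ZMod.pow_card, hJp, smul_smul]
    ring_nf
  -- conjugate times original is 1 on the conic
  have hconj : pellMul D (x, -y) (x, y) = ((1 : ZMod p), (0 : ZMod p)) := by
    simp only [pellMul, Prod.mk.injEq]
    constructor
    · linear_combination hnorm
    · ring
  have hfinal : A ^ (p + 2) = A := by
    have he : A ^ (p + 2) = A ^ p * A * A := by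
      rw [pow_succ, pow_succ]
    rw [he, hfrob, hA, ← PellAux.emb_mul, hconj, PellAux.emb_one, one_mul]
  apply PellAux.emb_injective D
  rw [PellAux.emb_pow, hfinal]
end

section
/- Let p be an odd prime, r ≥ 1 an integer, and D ∈ ℤ/p^rℤ a unit whose reduction modulo p is a non-square in ℤ/pℤ. Then the Pell equation x² − D y² = 1 has exactly p^{r−1}(p + 1) solutions (x,y) in (ℤ/p^rℤ) × (ℤ/p^rℤ). -/
/-!
The norm `N(x + y√D) = x² − D y²` of `S = (ℤ/p^rℤ)[√D]` restricts to a homomorphism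
`Sˣ → (ℤ/p^rℤ)ˣ` whose kernel is the Pell conic `H`. Since `D` is a non-square mod `p`, an element
of `S` is a unit unless both of its coordinates are divisible by `p`, so
`|Sˣ| = p^{2r} − p^{2r−2}`. The norm is onto: its image contains the squares, a subgroup of
index 2 of the cyclic group `(ℤ/p^rℤ)ˣ` of even order, and also an element reducing to the
non-square `D mod p`. Hence `|H| · p^{r−1}(p − 1) = p^{2r} − p^{2r−2}`, i.e.
`|H| = p^{r−1}(p + 1)`.
-/

theorem Subgroup.eq_top_of_lt_of_index_eq_two {G : Type*} [Group G] {K H : Subgroup G}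
    (hK : K.index = 2) (hKH : K < H) : H = ⊤ := by
  obtain ⟨w, hwH, hwK⟩ := SetLike.exists_of_lt hKH
  refine eq_top_iff.mpr fun g _ => ?_
  by_cases hg : g ∈ K
  · exact hKH.le hg
  · have hgw : g * w ∈ K := (mul_mem_iff_of_index_two hK).mpr (iff_of_false hg hwK)
    simpa using H.mul_mem (hKH.le hgw) (H.inv_mem hwH)

open Polynomial in
theorem FiniteField.exists_sq_sub_mul_sq_eq {F : Type*} [Field F] [Fintype F]
    (hF : Fintype.card F % 2 = 1) {d : F} (hd : d ≠ 0) (w : F) :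
    ∃ a b : F, a ^ 2 - d * b ^ 2 = w := by
  obtain ⟨a, b, hab⟩ := exists_root_sum_quadratic (f := X ^ 2)
    (g := C (-d) * X ^ 2 + C 0 * X + C (-w)) (degree_X_pow 2)
    (degree_quadratic (neg_ne_zero.mpr hd)) hF
  refine ⟨a, b, ?_⟩
  simp only [eval_add, eval_mul, eval_pow, eval_X, eval_C] at hab
  linear_combination hab

theorem sq_sub_mul_sq_eq_zero_iff {K : Type*} [Field K] {d : K} (hd : ∀ c : K, c ^ 2 ≠ d)
    {a b : K} : a ^ 2 - d * b ^ 2 = 0 ↔ a = 0 ∧ b = 0 := by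
  refine ⟨fun h => ?_, fun ⟨ha, hb⟩ => by simp [ha, hb]⟩
  by_cases hb : b = 0
  · simp_all
  · exact absurd (by field_simp; linear_combination h) (hd (a / b))

theorem Nat.card_subtype_isUnit (M : Type*) [Monoid M] :
    Nat.card {x : M // IsUnit x} = Nat.card Mˣ :=
  (Nat.card_congr (Equiv.ofInjective _ Units.val_injective)).symm

theorem Nat.card_subtype_add_card_subtype_not {α : Type*} [Finite α] (P : α → Prop) :
    Nat.card {x // P x} + Nat.card {x // ¬P x} = Nat.card α := by
  have h := Set.ncard_add_ncard_compl {x | P x}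
  simp only [← Nat.card_coe_set_eq] at h
  exact h

namespace ZMod

variable {p r : ℕ} [Fact p.Prime]

theorem isUnit_iff_map_ne_zero (π : ZMod (p ^ r) →+* ZMod p) {x : ZMod (p ^ r)} :
    IsUnit x ↔ π x ≠ 0 := by
  refine ⟨fun h => (h.map π).ne_zero, fun h => ?_⟩
  rw [← natCast_zmod_val x, map_natCast, Ne, natCast_eq_zero_iff] at h
  rw [← natCast_zmod_val x, isUnit_iff_coprime]
  exact ((Nat.Prime.coprime_iff_not_dvd Fact.out).mpr h).symm.pow_right r

theorem card_units_prime_pow (hr : r ≠ 0) :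
    Nat.card (ZMod (p ^ r))ˣ = p ^ (r - 1) * (p - 1) := by
  rw [Nat.card_eq_fintype_card, card_units_eq_totient,
    Nat.totient_prime_pow Fact.out (Nat.pos_of_ne_zero hr)]

theorem card_nonunits_prime_pow (hr : r ≠ 0) :
    Nat.card {x : ZMod (p ^ r) // ¬IsUnit x} = p ^ (r - 1) := by
  have hp : p.Prime := Fact.out
  have hsum := Nat.card_subtype_add_card_subtype_not (IsUnit : ZMod (p ^ r) → Prop)
  rw [Nat.card_subtype_isUnit, card_units_prime_pow hr, Nat.card_zmod] at hsum
  have hpow : p ^ r = p ^ (r - 1) * (p - 1) + p ^ (r - 1) := by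
    rw [← Nat.mul_succ, Nat.succ_eq_add_one, Nat.sub_add_cancel hp.one_le, ← pow_succ,
      Nat.sub_add_cancel (Nat.pos_of_ne_zero hr)]
  omega

end ZMod

namespace QuadraticAlgebra

section pellConic

variable {R : Type*} [CommRing R] {D : R}

theorem re_im_mem_pellConic_iff {z : QuadraticAlgebra R D 0} :
    (z.re, z.im) ∈ pellConic D ↔ z.norm = 1 := by
  rw [pellConic, Set.mem_ofPred_eq, norm_def]
  ring_nf

theorem card_ker_norm_units :
    Nat.card (Units.map (norm : QuadraticAlgebra R D 0 →* R)).ker = Nat.card (pellConic D) := by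
  refine Nat.card_congr (Equiv.ofBijective
    (fun u => ⟨(u.1.1.re, u.1.1.im), re_im_mem_pellConic_iff.mpr
      (by simpa using congrArg Units.val u.2)⟩) ⟨?_, ?_⟩)
  · intro u v huv
    simp only [Subtype.mk.injEq, Prod.mk.injEq] at huv
    exact Subtype.ext (Units.ext (QuadraticAlgebra.ext huv.1 huv.2))
  · rintro ⟨⟨x, y⟩, hP⟩
    have hnorm : (⟨x, y⟩ : QuadraticAlgebra R D 0).norm = 1 := re_im_mem_pellConic_iff.mp hP
    have hunit : IsUnit (⟨x, y⟩ : QuadraticAlgebra R D 0) := by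
      rw [isUnit_iff_norm_isUnit, hnorm]
      exact isUnit_one
    exact ⟨⟨hunit.unit, Units.ext hnorm⟩, rfl⟩

theorem card_units_eq_card_pellConic_mul
    (hsurj : Function.Surjective (Units.map (norm : QuadraticAlgebra R D 0 →* R))) :
    Nat.card (QuadraticAlgebra R D 0)ˣ = Nat.card (pellConic D) * Nat.card Rˣ := by
  rw [← (Units.map norm).ker.card_mul_index, Subgroup.index_ker,
    MonoidHom.range_eq_top.mpr hsurj, Subgroup.card_top, card_ker_norm_units]

end pellConic

variable {p r : ℕ} [Fact p.Prime] {π : ZMod (p ^ r) →+* ZMod p} {D : ZMod (p ^ r)}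

theorem isUnit_iff_isUnit_re_or_isUnit_im (hD : ∀ c : ZMod p, c ^ 2 ≠ π D)
    {z : QuadraticAlgebra (ZMod (p ^ r)) D 0} : IsUnit z ↔ IsUnit z.re ∨ IsUnit z.im := by
  simp only [isUnit_iff_norm_isUnit, ZMod.isUnit_iff_map_ne_zero π, ne_eq, ← not_and_or,
    ← sq_sub_mul_sq_eq_zero_iff hD, norm_def, map_sub, map_mul, map_add, map_zero]
  ring_nf

theorem card_units_of_prime_pow (hr : r ≠ 0) (hD : ∀ c : ZMod p, c ^ 2 ≠ π D) :
    Nat.card (QuadraticAlgebra (ZMod (p ^ r)) D 0)ˣ + p ^ (r - 1) * p ^ (r - 1) =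
      p ^ r * p ^ r := by
  have hsum := Nat.card_subtype_add_card_subtype_not
    (fun P : ZMod (p ^ r) × ZMod (p ^ r) => IsUnit P.1 ∨ IsUnit P.2)
  have hunits : Nat.card (QuadraticAlgebra (ZMod (p ^ r)) D 0)ˣ =
      Nat.card {P : ZMod (p ^ r) × ZMod (p ^ r) // IsUnit P.1 ∨ IsUnit P.2} := by
    rw [← Nat.card_subtype_isUnit]
    exact Nat.card_congr
      ((equivProd D 0).subtypeEquiv fun _ => isUnit_iff_isUnit_re_or_isUnit_im hD)
  have hnonunits : Nat.card {P : ZMod (p ^ r) × ZMod (p ^ r) // ¬(IsUnit P.1 ∨ IsUnit P.2)} =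
      p ^ (r - 1) * p ^ (r - 1) := by
    simp only [not_or]
    rw [Nat.card_congr (Equiv.subtypeProdEquivProd (p := (¬IsUnit ·)) (q := (¬IsUnit ·))),
      Nat.card_prod, ZMod.card_nonunits_prime_pow hr]
  rw [hunits, ← hnonunits, hsum, Nat.card_prod, Nat.card_zmod]

theorem exists_map_norm_eq (hp2 : p ≠ 2) (hd : π D ≠ 0) (w : ZMod p) :
    ∃ z : QuadraticAlgebra (ZMod (p ^ r)) D 0, π z.norm = w := by
  have hcard : Fintype.card (ZMod p) % 2 = 1 := by
    rw [ZMod.card]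
    exact Nat.odd_iff.mp ((Fact.out : p.Prime).odd_of_ne_two hp2)
  obtain ⟨a, b, hab⟩ := FiniteField.exists_sq_sub_mul_sq_eq hcard hd w
  obtain ⟨x, rfl⟩ := ZMod.ringHom_surjective π a
  obtain ⟨y, rfl⟩ := ZMod.ringHom_surjective π b
  exact ⟨⟨x, y⟩, by rw [← hab, norm_def]; simp only [zero_mul, add_zero, map_sub, map_mul]; ring⟩

theorem units_map_norm_surjective (hp2 : p ≠ 2) (hr : r ≠ 0) (hD : ∀ c : ZMod p, c ^ 2 ≠ π D) :
    Function.Surjective (Units.map (norm : QuadraticAlgebra (ZMod (p ^ r)) D 0 →* _)) := by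
  have hp : p.Prime := Fact.out
  have := ZMod.isCyclic_units_of_prime_pow p hp hp2 r
  have hsquares : (powMonoidHom 2 : (ZMod (p ^ r))ˣ →* _).range.index = 2 := by
    rw [IsCyclic.index_powMonoidHom_range, Nat.card_eq_fintype_card, ZMod.card_units_eq_totient,
      Nat.gcd_eq_right_iff_dvd]
    refine (Nat.totient_even ?_).two_dvd
    calc 2 < p := lt_of_le_of_ne hp.two_le (Ne.symm hp2)
      _ ≤ p ^ r := Nat.le_self_pow hr p
  rw [← MonoidHom.range_eq_top]
  refine Subgroup.eq_top_of_lt_of_index_eq_two hsquares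
    (SetLike.lt_iff_le_and_exists.mpr ⟨?_, ?_⟩)
  · rintro _ ⟨v, rfl⟩
    refine ⟨Units.map (algebraMap (ZMod (p ^ r)) (QuadraticAlgebra _ D 0)).toMonoidHom v,
      Units.ext ?_⟩
    simp
  · have hd : π D ≠ 0 := fun h => hD 0 (by rw [h]; ring)
    obtain ⟨z, hz⟩ := exists_map_norm_eq hp2 hd (π D)
    have hzu : IsUnit z := by
      rw [isUnit_iff_norm_isUnit, ZMod.isUnit_iff_map_ne_zero π, hz]
      exact hd
    refine ⟨Units.map norm hzu.unit, ⟨_, rfl⟩, ?_⟩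
    rintro ⟨v, hv⟩
    apply hD (π v)
    rw [← map_pow, ← hz]
    congr 1
    simpa using congrArg Units.val hv

end QuadraticAlgebra

theorem pellConic_card_prime_pow_general (p : ℕ) (hp : p.Prime) (hp2 : p ≠ 2) (r : ℕ) (hr : 1 ≤ r)
    (D : ZMod (p ^ r))
    (hD : ∀ c : ZMod p, c ^ 2 ≠
      ZMod.castHom (dvd_pow_self p (Nat.one_le_iff_ne_zero.mp hr)) (ZMod p) D) :
    Nat.card (pellConic D) = p ^ (r - 1) * (p + 1) := by
  have : Fact p.Prime := ⟨hp⟩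
  have hr0 : r ≠ 0 := Nat.one_le_iff_ne_zero.mp hr
  have hcount := QuadraticAlgebra.card_units_of_prime_pow hr0 hD
  rw [QuadraticAlgebra.card_units_eq_card_pellConic_mul
      (QuadraticAlgebra.units_map_norm_surjective hp2 hr0 hD),
    ZMod.card_units_prime_pow hr0] at hcount
  have hpow : p ^ r = p ^ (r - 1) * p := by rw [← pow_succ, Nat.sub_add_cancel hr]
  have hpos : 0 < p ^ (r - 1) * (p - 1) :=
    Nat.mul_pos (pow_pos hp.pos _) (Nat.sub_pos_of_lt hp.one_lt)
  refine Nat.eq_of_mul_eq_mul_right hpos ?_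
  zify [hp.one_le] at hcount hpow ⊢
  linear_combination hcount + (p ^ r + p ^ (r - 1) * p) * hpow

/-- For an odd prime `p`, `r ≥ 1`, and a unit `D ∈ ℤ/p^rℤ` whose
reduction modulo `p` is a non-square in `ℤ/pℤ`, the Pell equation `x² − D y² = 1`
has exactly `p^{r−1}(p+1)` solutions in `ℤ/p^rℤ`. -/
theorem pellConic_card_prime_pow (p : ℕ) (hp : p.Prime) (hp2 : p ≠ 2) (r : ℕ) (hr : 1 ≤ r)
    (D : ZMod (p ^ r)) (hDu : IsUnit D)
    (hD : ∀ c : ZMod p, c ^ 2 ≠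
      ZMod.castHom (dvd_pow_self p (Nat.one_le_iff_ne_zero.mp hr)) (ZMod p) D) :
    Nat.card (pellConic D) = p ^ (r - 1) * (p + 1) :=
  pellConic_card_prime_pow_general p hp hp2 r hr D hD
end

section
/- Let p be an odd prime, r ≥ 1 an integer, and D ∈ ℤ/p^rℤ a unit whose reduction modulo p is a non-square in ℤ/pℤ. Then the group (H_{D,ℤ/p^rℤ}, ⊗) is cyclic: there exists a point (a,b) ∈ H_{D,ℤ/p^rℤ} such that every solution of x² − D y² = 1 in ℤ/p^rℤ is an ⊗-power of (a,b). -/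
theorem MonoidHom.card_ker_comp_le {G H K : Type*} [Group G] [Group H] [MulOneClass K]
    [Finite H] (f : G →* H) (g : H →* K) :
    Nat.card (g.comp f).ker ≤ Nat.card f.ker * Nat.card g.ker := by
  set f' := f.domRestrict (g.comp f).ker
  have hrange : f'.range ≤ g.ker := by
    rintro _ ⟨x, rfl⟩
    exact x.2
  rw [← f'.ker.card_mul_index, Subgroup.index_ker, f.ker_domRestrict,
    Nat.card_congr (Subgroup.subgroupOfEquivOfLe fun x hx ↦ by simp_all).toEquiv]
  exact Nat.mul_le_mul_left _ (Subgroup.card_le_of_le hrange)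

theorem card_ker_powMonoidHom_prime_pow_le {G : Type*} [CommGroup G] [Finite G] {p : ℕ}
    (h : Nat.card (powMonoidHom p : G →* G).ker ≤ p) (e : ℕ) :
    Nat.card (powMonoidHom (p ^ e) : G →* G).ker ≤ p ^ e := by
  induction e with
  | zero => simp
  | succ e ih =>
    have hcomp : (powMonoidHom (p ^ (e + 1)) : G →* G) =
        (powMonoidHom (p ^ e)).comp (powMonoidHom p) := by
      ext x; simp [pow_succ', pow_mul]
    rw [hcomp, pow_succ']
    exact (MonoidHom.card_ker_comp_le _ _).trans (Nat.mul_le_mul h ih)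

theorem IsPGroup.isCyclic_of_card_ker_powMonoidHom_le {G : Type*} [CommGroup G] [Finite G]
    {p : ℕ} [Fact p.Prime] (hG : IsPGroup p G)
    (h : Nat.card (powMonoidHom p : G →* G).ker ≤ p) : IsCyclic G := by
  obtain ⟨n, hn⟩ := IsPGroup.iff_card.mp hG
  obtain ⟨k, -, hk⟩ := (Nat.dvd_prime_pow Fact.out).mp (hn ▸ Group.exponent_dvd_nat_card (G := G))
  refine IsCyclic.of_exponent_eq_card (le_antisymm (Nat.le_of_dvd Nat.card_pos
    Group.exponent_dvd_nat_card) ?_)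
  have htop : (powMonoidHom (p ^ k) : G →* G).ker = ⊤ := by
    ext x; simp [← hk, Monoid.pow_exponent_eq_one]
  calc Nat.card G = Nat.card (powMonoidHom (p ^ k) : G →* G).ker := by rw [htop, Subgroup.card_top]
    _ ≤ p ^ k := card_ker_powMonoidHom_prime_pow_le h k
    _ = Monoid.exponent G := hk.symm

theorem eq_one_of_pow_prime_pow_eq_one {R : Type*} [CommRing R] [IsReduced R] {p : ℕ}
    [Fact p.Prime] [CharP R p] {x : R} {k : ℕ} (hx : x ^ p ^ k = 1) : x = 1 := by
  rw [← sub_eq_zero]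
  exact IsReduced.eq_zero _ ⟨p ^ k, by rw [sub_pow_char_pow, hx, one_pow, sub_self]⟩

theorem isCyclic_of_isPGroup_ker {G R : Type*} [CommGroup G] [Finite G] [CommRing R]
    [IsDomain R] {p : ℕ} [Fact p.Prime] [CharP R p] (ψ : G →* R) (hker : IsPGroup p ψ.ker)
    [IsCyclic ψ.ker] : IsCyclic G := by
  have : IsZGroup G := by
    refine ⟨fun q hq Q ↦ ?_⟩
    have := Fact.mk hq
    by_cases hqp : q = p
    · subst hqp
      refine Subgroup.isCyclic_of_le (H' := ψ.ker) fun x hx ↦ ?_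
      obtain ⟨k, hk⟩ := Q.isPGroup' ⟨x, hx⟩
      exact eq_one_of_pow_prime_pow_eq_one (k := k) <| by
        rw [← map_pow, show x ^ q ^ k = 1 from congrArg Subtype.val hk, map_one]
    · refine isCyclic_of_injective_ringHom (ψ.comp (Q : Subgroup G).subtype)
        ((injective_iff_map_eq_one _).mpr fun x hx ↦ Subtype.ext ?_)
      exact Subgroup.disjoint_def.mp (IsPGroup.disjoint_of_ne q p hqp _ _ Q.isPGroup' hker)
        x.2 hx
  infer_instance

theorem one_add_natCast_mul_pow_prime_pow_eq_one {S : Type*} [CommRing S] {p r : ℕ}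
    (hp : p.Prime) (hpr : (p : S) ^ r = 0) (c : S) : (1 + p * c) ^ p ^ r = 1 := by
  obtain ⟨y, hy⟩ := ZMod.exists_one_add_mul_pow_prime_pow_eq (u := (p : S)) (v := 1) hp
    (one_dvd _) (by rw [mul_one, ← sq]; exact pow_dvd_pow _ hp.two_le) c r
  rw [hy, hpr, zero_mul, zero_mul, add_zero]

theorem natCast_mul_eq_zero_of_one_add_pow_prime_eq_one {S : Type*} [CommRing S] {p : ℕ}
    (hp : p.Prime) (hp2 : p ≠ 2) (hnil : IsNilpotent (p : S)) {w : S} (hw : (p : S) ∣ w)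
    (h : (1 + w) ^ p = 1) : (p : S) * w = 0 := by
  have hp3 : 3 ≤ p := lt_of_le_of_ne hp.two_le hp2.symm
  obtain ⟨c, rfl⟩ := hw
  have hdvd : (p : S) * (p * c) * p ∣ (p * c) ^ p :=
    calc (p : S) * (p * c) * p = p ^ 3 * c := by ring
      _ ∣ p ^ p * c ^ p := mul_dvd_mul (pow_dvd_pow _ hp3) (dvd_pow_self c hp.ne_zero)
      _ = (p * c) ^ p := (mul_pow _ _ _).symm
  obtain ⟨y, hy⟩ := ZMod.exists_one_add_mul_pow_prime_eq hp (dvd_mul_right _ _) hdvd 1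
  have hu : IsUnit (1 + p * y : S) := ((Commute.all _ _).isNilpotent_mul_right hnil).isUnit_one_add
  rw [mul_one, h, left_eq_add] at hy
  exact hu.mul_left_eq_zero.mp hy

theorem eq_of_sq_eq_sq_of_isNilpotent_sub_one {R : Type*} [CommRing R] {x y : R}
    (h2 : IsUnit (2 : R)) (hx : IsNilpotent (x - 1)) (hy : IsNilpotent (y - 1))
    (h : x ^ 2 = y ^ 2) : x = y := by
  have hu : IsUnit (x + y) := by
    convert ((Commute.all _ _).isNilpotent_add hx hy).isUnit_add_left_of_commute h2
      (Commute.all _ _) using 1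
    ring
  have : (x - y) * (x + y) = 0 := by linear_combination h
  exact sub_eq_zero.mp (hu.mul_left_eq_zero.mp this)

theorem ZMod.natCast_dvd_of_castHom_eq_zero {m n : ℕ} (h : m ∣ n) {x : ZMod n}
    (hx : ZMod.castHom h (ZMod m) x = 0) : (m : ZMod n) ∣ x := by
  obtain ⟨k, rfl⟩ := ZMod.intCast_surjective x
  rw [map_intCast, ZMod.intCast_zmod_eq_zero_iff_dvd] at hx
  obtain ⟨c, rfl⟩ := hx
  exact ⟨c, by push_cast; ring⟩

theorem ZMod.isNilpotent_natCast (p r : ℕ) : IsNilpotent (p : ZMod (p ^ r)) :=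
  ⟨r, by rw [← Nat.cast_pow, ZMod.natCast_self]⟩

namespace QuadraticAlgebra

variable {R S : Type*} {a b : R}

instance [Finite R] : Finite (QuadraticAlgebra R a b) :=
  Finite.of_equiv _ (equivProd a b).symm

instance [CommSemiring R] {p : ℕ} [CharP R p] : CharP (QuadraticAlgebra R a b) p :=
  charP_of_injective_algebraMap algebraMap_injective p

variable [CommRing R] [CommRing S]

def map (f : R →+* S) {a' b' : S} (ha : f a = a') (hb : f b = b') :
    QuadraticAlgebra R a b →+* QuadraticAlgebra S a' b' where
  toFun z := ⟨f z.re, f z.im⟩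
  map_one' := by ext <;> simp
  map_mul' z w := by ext <;> simp [← ha, ← hb]
  map_zero' := by ext <;> simp
  map_add' z w := by ext <;> simp

theorem natCast_dvd_of_dvd_re_of_dvd_im {n : ℕ} {z : QuadraticAlgebra R a b}
    (hre : (n : R) ∣ z.re) (him : (n : R) ∣ z.im) : (n : QuadraticAlgebra R a b) ∣ z := by
  obtain ⟨x, hx⟩ := hre
  obtain ⟨y, hy⟩ := him
  exact ⟨⟨x, y⟩, by ext <;> simp [hx, hy]⟩

end QuadraticAlgebra

section Reduction

open QuadraticAlgebra

variable {p r : ℕ} [Fact p.Prime] (hr : r ≠ 0) (D : ZMod (p ^ r))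

local notation "𝔸" => QuadraticAlgebra (ZMod (p ^ r)) D 0

def unitaryReduction : unitary 𝔸 →*
    QuadraticAlgebra (ZMod p) (ZMod.castHom (dvd_pow_self p hr) (ZMod p) D) 0 :=
  (map (ZMod.castHom (dvd_pow_self p hr) (ZMod p)) rfl (map_zero _)).toMonoidHom.comp
    (unitary _).subtype

theorem re_unitaryReduction (z : unitary 𝔸) :
    (unitaryReduction hr D z).re = ZMod.castHom (dvd_pow_self p hr) (ZMod p) (z : 𝔸).re :=
  rfl

theorem im_unitaryReduction (z : unitary 𝔸) :
    (unitaryReduction hr D z).im = ZMod.castHom (dvd_pow_self p hr) (ZMod p) (z : 𝔸).im :=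
  rfl

variable {hr D}

theorem natCast_dvd_sub_one_of_mem_ker_unitaryReduction
    {z : unitary 𝔸} (hz : z ∈ (unitaryReduction hr D).ker) :
    (p : 𝔸) ∣ (z : 𝔸) - 1 := by
  have hre := re_unitaryReduction hr D z
  have him := im_unitaryReduction hr D z
  rw [MonoidHom.mem_ker.mp hz, re_one] at hre
  rw [MonoidHom.mem_ker.mp hz, im_one] at him
  refine natCast_dvd_of_dvd_re_of_dvd_im (ZMod.natCast_dvd_of_castHom_eq_zero (dvd_pow_self p hr)
    ?_) (ZMod.natCast_dvd_of_castHom_eq_zero (dvd_pow_self p hr) ?_)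
  · rw [re_sub, re_one, map_sub, map_one, ← hre, sub_self]
  · rw [im_sub, im_one, sub_zero, ← him]

theorem isPGroup_ker_unitaryReduction : IsPGroup p (unitaryReduction hr D).ker := by
  intro z
  refine ⟨r, Subtype.ext (Subtype.ext ?_)⟩
  obtain ⟨c, hc⟩ := natCast_dvd_sub_one_of_mem_ker_unitaryReduction z.2
  rw [sub_eq_iff_eq_add'] at hc
  change ((z : unitary 𝔸) : 𝔸) ^ p ^ r = 1
  rw [hc, one_add_natCast_mul_pow_prime_pow_eq_one Fact.out
    (by rw [← Nat.cast_pow, CharP.cast_eq_zero])]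

theorem natCast_mul_sub_one_eq_zero_of_pow_prime_eq_one (hp2 : p ≠ 2)
    {z : unitary 𝔸} (hz : z ∈ (unitaryReduction hr D).ker) (hzp : z ^ p = 1) :
    (p : 𝔸) * ((z : 𝔸) - 1) = 0 :=
  natCast_mul_eq_zero_of_one_add_pow_prime_eq_one Fact.out hp2
    ⟨r, by rw [← Nat.cast_pow, CharP.cast_eq_zero]⟩
    (natCast_dvd_sub_one_of_mem_ker_unitaryReduction hz)
    (by rw [add_sub_cancel]; exact congrArg Subtype.val hzp)

theorem injOn_im_ker_unitaryReduction (hp2 : p ≠ 2) :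
    Set.InjOn (fun z : unitary 𝔸 ↦ (z : 𝔸).im) (unitaryReduction hr D).ker := by
  have h2 : IsUnit (2 : ZMod (p ^ r)) := by
    rw [← Nat.cast_ofNat, ZMod.isUnit_iff_coprime]
    exact Nat.Coprime.pow_right _ ((Nat.coprime_primes Nat.prime_two Fact.out).mpr hp2.symm)
  have hnil : ∀ z ∈ (unitaryReduction hr D).ker, IsNilpotent ((z : 𝔸).re - 1) := by
    intro z hz
    obtain ⟨c, hc⟩ := natCast_dvd_sub_one_of_mem_ker_unitaryReduction hz
    have := congrArg re hc
    simp only [re_sub, re_one, re_mul, re_natCast, im_natCast, mul_zero, zero_mul, add_zero] at this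
    exact this ▸ (Commute.all _ _).isNilpotent_mul_right (ZMod.isNilpotent_natCast p r)
  have hnorm : ∀ z : unitary 𝔸, (z : 𝔸).re ^ 2 = 1 + D * (z : 𝔸).im ^ 2 := by
    intro z
    have := norm_eq_one_iff_mem_unitary.mpr z.2
    rw [norm_def] at this
    linear_combination this
  intro z hz w hw him
  refine Subtype.ext (QuadraticAlgebra.ext ?_ him)
  exact eq_of_sq_eq_sq_of_isNilpotent_sub_one h2 (hnil z hz) (hnil w hw)
    (by rw [hnorm, hnorm, show (z : 𝔸).im = (w : 𝔸).im from him])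

open Finset in
theorem card_ker_powMonoidHom_ker_unitaryReduction_le (hp2 : p ≠ 2) :
    Nat.card (powMonoidHom p : (unitaryReduction hr D).ker →* _).ker ≤ p := by
  classical
  let f : (powMonoidHom p : (unitaryReduction hr D).ker →* _).ker →
      {y : ZMod (p ^ r) // p • y = 0} := fun z ↦
    ⟨((z : (unitaryReduction hr D).ker) : 𝔸).im, by
      have := congrArg im (natCast_mul_sub_one_eq_zero_of_pow_prime_eq_one hp2 z.1.2
        (congrArg Subtype.val z.2))
      simp only [im_mul, re_natCast, im_natCast, im_sub, im_one, sub_zero, zero_mul, add_zero,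
        mul_zero] at this
      rwa [nsmul_eq_mul]⟩
  have hf : Function.Injective f := fun z w h ↦ Subtype.ext (Subtype.ext
    (injOn_im_ker_unitaryReduction hp2 z.1.2 w.1.2 (congrArg Subtype.val h)))
  calc Nat.card _ ≤ Nat.card {y : ZMod (p ^ r) // p • y = 0} := Nat.card_le_card_of_injective f hf
    _ = #{y : ZMod (p ^ r) | p • y = 0} := by rw [Nat.card_eq_fintype_card, Fintype.card_subtype]
    _ ≤ p := IsAddCyclic.card_nsmul_eq_zero_le (Fact.out : p.Prime).pos

end Reduction

theorem isCyclic_unitary_quadraticAlgebra_zmod_prime_pow {p r : ℕ} [Fact p.Prime] (hp2 : p ≠ 2)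
    (hr : r ≠ 0) (D : ZMod (p ^ r))
    (hD : ∀ c : ZMod p, c ^ 2 ≠ ZMod.castHom (dvd_pow_self p hr) (ZMod p) D) :
    IsCyclic (unitary (QuadraticAlgebra (ZMod (p ^ r)) D 0)) := by
  -- the instance making `QuadraticAlgebra.instField` apply to `𝔽_p[√D̄]`
  have : Fact (∀ c, c ^ 2 ≠ ZMod.castHom (dvd_pow_self p hr) (ZMod p) D + 0 * c) :=
    ⟨by simpa using hD⟩
  have hker : IsPGroup p (unitaryReduction hr D).ker := isPGroup_ker_unitaryReduction
  have : IsCyclic (unitaryReduction hr D).ker :=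
    hker.isCyclic_of_card_ker_powMonoidHom_le (card_ker_powMonoidHom_ker_unitaryReduction_le hp2)
  exact isCyclic_of_isPGroup_ker (unitaryReduction hr D) hker

theorem mem_pellConic_iff_mem_unitary {R : Type*} [CommRing R] (D : R) (P : R × R) :
    P ∈ pellConic D ↔ (⟨P.1, P.2⟩ : QuadraticAlgebra R D 0) ∈ unitary _ := by
  rw [← QuadraticAlgebra.norm_eq_one_iff_mem_unitary, QuadraticAlgebra.norm_def]
  change P.1 ^ 2 - D * P.2 ^ 2 = 1 ↔ _
  constructor <;> intro h <;> linear_combination h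

theorem pellPow_re_im {R : Type*} [CommRing R] (D : R) (z : QuadraticAlgebra R D 0) (n : ℕ) :
    pellPow D (z.re, z.im) n = ((z ^ n).re, (z ^ n).im) := by
  induction n with
  | zero => rw [pellPow, pow_zero]; rfl
  | succ n ih =>
    rw [pellPow, ih, pow_succ']
    ext <;> simp [pellMul]
    ring

theorem pellConic_cyclic_prime_pow_general (p : ℕ) (hp : p.Prime) (hp2 : p ≠ 2) (r : ℕ) (hr : 1 ≤ r)
    (D : ZMod (p ^ r))
    (hD : ∀ c : ZMod p, c ^ 2 ≠
      ZMod.castHom (dvd_pow_self p (Nat.one_le_iff_ne_zero.mp hr)) (ZMod p) D) :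
    ∃ G ∈ pellConic D, ∀ P ∈ pellConic D, ∃ n : ℕ, pellPow D G n = P := by
  have := Fact.mk hp
  have := isCyclic_unitary_quadraticAlgebra_zmod_prime_pow hp2
    (Nat.one_le_iff_ne_zero.mp hr) D hD
  obtain ⟨g, hg⟩ := IsCyclic.exists_monoid_generator (α := unitary (QuadraticAlgebra _ D 0))
  refine ⟨((g : QuadraticAlgebra _ D 0).re, (g : QuadraticAlgebra _ D 0).im),
    (mem_pellConic_iff_mem_unitary D _).mpr g.2, fun P hP ↦ ?_⟩
  obtain ⟨n, hn⟩ := hg ⟨_, (mem_pellConic_iff_mem_unitary D P).mp hP⟩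
  refine ⟨n, ?_⟩
  rw [pellPow_re_im, ← SubmonoidClass.coe_pow, show g ^ n = _ from hn]

/-- For an odd prime `p`, `r ≥ 1`, and a unit `D ∈ ℤ/p^rℤ` whose
reduction modulo `p` is a non-square in `ℤ/pℤ`, the group `(H_{D,ℤ/p^rℤ}, ⊗)` is cyclic:
some point of the conic generates all solutions of `x² − D y² = 1` as its `⊗`-powers. -/
theorem pellConic_cyclic_prime_pow (p : ℕ) (hp : p.Prime) (hp2 : p ≠ 2) (r : ℕ) (hr : 1 ≤ r)
    (D : ZMod (p ^ r)) (hDu : IsUnit D)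
    (hD : ∀ c : ZMod p, c ^ 2 ≠
      ZMod.castHom (dvd_pow_self p (Nat.one_le_iff_ne_zero.mp hr)) (ZMod p) D) :
    ∃ G ∈ pellConic D, ∀ P ∈ pellConic D, ∃ n : ℕ, pellPow D G n = P :=
  pellConic_cyclic_prime_pow_general p hp hp2 r hr D hD
end

section
/- Let p be an odd prime, r ≥ 1 an integer, and D an integer that is a quadratic non-residue modulo p. Let x₀, y₀ be integers with x₀² − D y₀² ≡ 1 (mod p) and y₀ ≢ 0 (mod p). Then for every integer k there exists an integer h, unique modulo p^{r−1}, such that (x₀ + kp)² − D(y₀ + hp)² ≡ 1 (mod p^r). Consequently each such solution modulo p gives rise to exactly p^{r−1} solutions of the Pell equation modulo p^r. -/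
/-- Let `p` be an odd prime, `r ≥ 1`, and `D` an integer which is a
quadratic non-residue modulo `p`. Let `x₀, y₀` be integers with `x₀² − D y₀² ≡ 1 (mod p)`
and `y₀ ≢ 0 (mod p)`. Then for every integer `k` there exists an integer `h`, unique
modulo `p^{r−1}`, such that `(x₀ + kp)² − D (y₀ + hp)² ≡ 1 (mod p^r)`; consequently each
such solution modulo `p` gives rise to exactly `p^{r−1}` solutions modulo `p^r`. -/
theorem pell_lift_solutions (p : ℕ) (hp : p.Prime) (hp2 : p ≠ 2) (r : ℕ) (hr : 1 ≤ r)
    (D : ℤ) (hDp : ¬ (p : ℤ) ∣ D) (hD : ∀ c : ℤ, ¬ c ^ 2 ≡ D [ZMOD (p : ℤ)])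
    (x₀ y₀ : ℤ) (hxy : x₀ ^ 2 - D * y₀ ^ 2 ≡ 1 [ZMOD (p : ℤ)]) (hy : ¬ (p : ℤ) ∣ y₀) :
    (∀ k : ℤ, ∃ h : ℤ,
      ((x₀ + k * p) ^ 2 - D * (y₀ + h * p) ^ 2 ≡ 1 [ZMOD (p : ℤ) ^ r]) ∧
      ∀ h' : ℤ, ((x₀ + k * p) ^ 2 - D * (y₀ + h' * p) ^ 2 ≡ 1 [ZMOD (p : ℤ) ^ r]) →
        h' ≡ h [ZMOD (p : ℤ) ^ (r - 1)]) ∧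
    {kh : ℕ × ℕ | kh.1 < p ^ (r - 1) ∧ kh.2 < p ^ (r - 1) ∧
      (x₀ + (kh.1 : ℤ) * p) ^ 2 - D * (y₀ + (kh.2 : ℤ) * p) ^ 2 ≡ 1 [ZMOD (p : ℤ) ^ r]}.ncard
      = p ^ (r - 1) := by
  have hppos : 0 < p := hp.pos
  have hp0 : ((p : ℤ)) ≠ 0 := by exact_mod_cast hppos.ne'
  have hpZ : Prime (p : ℤ) := Nat.prime_iff_prime_int.mp hp
  set N : ℕ := p ^ (r - 1) with hN
  set M : ℤ := (p : ℤ) ^ (r - 1) with hM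
  have hMN : ((N : ℤ)) = M := by push_cast [hN, hM]; ring
  have hNpos : 0 < N := pow_pos hppos _
  have hN0 : ((N : ℤ)) ≠ 0 := by exact_mod_cast hNpos.ne'
  haveI : NeZero N := ⟨hNpos.ne'⟩
  have hpr : ((p : ℤ)) ^ r = M * p := by
    rw [hM, ← pow_succ, Nat.sub_add_cancel hr]
  obtain ⟨c, hc⟩ : (p : ℤ) ∣ (x₀ ^ 2 - D * y₀ ^ 2 - 1) := by
    have := Int.ModEq.dvd hxy.symm
    simpa using this
  -- reduction of the congruence mod p^r to a congruence mod M = p^(r-1)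
  have hred : ∀ k h : ℤ,
      (((x₀ + k * p) ^ 2 - D * (y₀ + h * p) ^ 2 ≡ 1 [ZMOD (p : ℤ) ^ r]) ↔
        (2 * D * y₀ * h + D * p * h ^ 2 ≡ c + 2 * x₀ * k + k ^ 2 * p [ZMOD M])) := by
    intro k h
    rw [Int.modEq_iff_dvd, Int.modEq_iff_dvd, hpr]
    have e : (1 : ℤ) - ((x₀ + k * p) ^ 2 - D * (y₀ + h * p) ^ 2) =
        ((2 * D * y₀ * h + D * p * h ^ 2) - (c + 2 * x₀ * k + k ^ 2 * p)) * p := by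
      linear_combination (-1 : ℤ) * hc
    rw [e, mul_dvd_mul_iff_right hp0]
    exact dvd_sub_comm
  -- coprimality
  have hcop : ∀ s : ℤ, IsCoprime M (2 * D * y₀ + D * p * s) := by
    intro s
    apply IsCoprime.pow_left
    rw [hpZ.coprime_iff_not_dvd]
    intro hdvd
    have hDps : (p : ℤ) ∣ D * p * s := ⟨D * s, by ring⟩
    have h2 : (p : ℤ) ∣ 2 * D * y₀ := by
      have := hdvd.sub hDps
      simpa using this
    rcases hpZ.dvd_mul.mp h2 with h3 | h3
    · rcases hpZ.dvd_mul.mp h3 with h4 | h4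
      · have : p ∣ 2 := by exact_mod_cast h4
        exact hp2 ((Nat.prime_dvd_prime_iff_eq hp Nat.prime_two).mp this)
      · exact hDp h4
    · exact hy h3
  -- uniqueness
  have huniq : ∀ a b : ℤ,
      (2 * D * y₀ * a + D * p * a ^ 2 ≡ 2 * D * y₀ * b + D * p * b ^ 2 [ZMOD M]) →
      a ≡ b [ZMOD M] := by
    intro a b hab
    have hd : M ∣ (b - a) * (2 * D * y₀ + D * p * (a + b)) := by
      have h1 := Int.ModEq.dvd hab
      have e : (2 * D * y₀ * b + D * p * b ^ 2) - (2 * D * y₀ * a + D * p * a ^ 2) =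
          (b - a) * (2 * D * y₀ + D * p * (a + b)) := by ring
      rwa [e] at h1
    exact Int.modEq_iff_dvd.mpr ((hcop (a + b)).dvd_of_dvd_mul_right hd)
  -- existence via injectivity on ZMod N
  have hexist : ∀ A : ℤ, ∃ h : ℤ, 2 * D * y₀ * h + D * p * h ^ 2 ≡ A [ZMOD M] := by
    intro A
    set g : ZMod N → ZMod N := fun z =>
      ((2 * D * y₀ : ℤ) : ZMod N) * z + ((D * (p : ℤ) : ℤ) : ZMod N) * z ^ 2 with hg
    have gval : ∀ a : ℤ, g (a : ZMod N) = ((2 * D * y₀ * a + D * p * a ^ 2 : ℤ) : ZMod N) := by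
      intro a; rw [hg]; push_cast; ring
    have ginj : Function.Injective g := by
      intro z w hzw
      obtain ⟨a, rfl⟩ := ZMod.intCast_surjective z
      obtain ⟨b, rfl⟩ := ZMod.intCast_surjective w
      rw [gval, gval] at hzw
      have hm : 2 * D * y₀ * a + D * p * a ^ 2 ≡ 2 * D * y₀ * b + D * p * b ^ 2 [ZMOD M] := by
        rw [← hMN]; exact (ZMod.intCast_eq_intCast_iff _ _ _).mp hzw
      have := huniq a b hm
      rw [← hMN] at this
      exact (ZMod.intCast_eq_intCast_iff _ _ _).mpr this
    have gsurj : Function.Surjective g := Finite.injective_iff_surjective.mp ginj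
    obtain ⟨z, hz⟩ := gsurj ((A : ℤ) : ZMod N)
    obtain ⟨h, rfl⟩ := ZMod.intCast_surjective z
    rw [gval] at hz
    refine ⟨h, ?_⟩
    rw [← hMN]
    exact (ZMod.intCast_eq_intCast_iff _ _ _).mp hz
  -- main first part
  have main : ∀ k : ℤ, ∃ h : ℤ,
      ((x₀ + k * p) ^ 2 - D * (y₀ + h * p) ^ 2 ≡ 1 [ZMOD (p : ℤ) ^ r]) ∧
      ∀ h' : ℤ, ((x₀ + k * p) ^ 2 - D * (y₀ + h' * p) ^ 2 ≡ 1 [ZMOD (p : ℤ) ^ r]) →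
        h' ≡ h [ZMOD M] := by
    intro k
    obtain ⟨h, hh⟩ := hexist (c + 2 * x₀ * k + k ^ 2 * p)
    refine ⟨h, (hred k h).mpr hh, fun h' hh' => ?_⟩
    exact huniq h' h (((hred k h').mp hh').trans hh.symm)
  refine ⟨main, ?_⟩
  -- counting
  set F : ℤ → ℤ := fun k => (main k).choose with hF
  set H : ℕ → ℕ := fun k => ((F k) % (N : ℤ)).toNat with hH
  have hHval : ∀ k : ℕ, ((H k : ℤ)) = F k % (N : ℤ) := by
    intro k
    exact Int.toNat_of_nonneg (Int.emod_nonneg _ hN0)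
  have hHlt : ∀ k : ℕ, H k < N := by
    intro k
    have : ((H k : ℤ)) < (N : ℤ) := by
      rw [hHval]; exact Int.emod_lt_of_pos _ (by exact_mod_cast hNpos)
    exact_mod_cast this
  have hHmod : ∀ k : ℕ, ((H k : ℤ)) ≡ F k [ZMOD M] := by
    intro k
    rw [hHval, ← hMN]
    exact Int.emod_emod_of_dvd _ dvd_rfl
  have hHsol : ∀ k : ℕ,
      (x₀ + (k : ℤ) * p) ^ 2 - D * (y₀ + (H k : ℤ) * p) ^ 2 ≡ 1 [ZMOD (p : ℤ) ^ r] := by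
    intro k
    have hFsol := (main (k : ℤ)).choose_spec.1
    rw [hred] at hFsol ⊢
    have hmk : ((H k : ℤ)) ≡ F k [ZMOD M] := hHmod k
    calc 2 * D * y₀ * (H k : ℤ) + D * p * (H k : ℤ) ^ 2
        ≡ 2 * D * y₀ * F k + D * p * (F k) ^ 2 [ZMOD M] :=
          (hmk.mul_left _).add ((hmk.pow 2).mul_left _)
      _ ≡ c + 2 * x₀ * (k : ℤ) + (k : ℤ) ^ 2 * p [ZMOD M] := hFsol
  have hTeq : {kh : ℕ × ℕ | kh.1 < p ^ (r - 1) ∧ kh.2 < p ^ (r - 1) ∧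
      (x₀ + (kh.1 : ℤ) * p) ^ 2 - D * (y₀ + (kh.2 : ℤ) * p) ^ 2 ≡ 1 [ZMOD (p : ℤ) ^ r]}
      = (fun k : ℕ => (k, H k)) '' (Set.Iio N) := by
    ext ⟨k, h⟩
    simp only [Set.mem_setOf_eq, Set.mem_image, Set.mem_Iio, Prod.mk.injEq]
    constructor
    · rintro ⟨hk, hh, hS⟩
      refine ⟨k, hk, rfl, ?_⟩
      have h1 : (h : ℤ) ≡ F k [ZMOD M] := (main (k : ℤ)).choose_spec.2 _ hS
      have h2 : (h : ℤ) ≡ (H k : ℤ) [ZMOD M] := h1.trans (hHmod k).symm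
      have h3 : (h : ℤ) % (N : ℤ) = (H k : ℤ) % (N : ℤ) := by rw [hMN]; exact h2
      have e1 : (h : ℤ) % (N : ℤ) = (h : ℤ) :=
        Int.emod_eq_of_lt (by positivity) (by exact_mod_cast hh)
      have e2 : ((H k : ℤ)) % (N : ℤ) = (H k : ℤ) :=
        Int.emod_eq_of_lt (by positivity) (by exact_mod_cast hHlt k)
      have : (h : ℤ) = (H k : ℤ) := by rw [← e1, ← e2, h3]
      exact_mod_cast this.symm
    · rintro ⟨k', hk', rfl, rfl⟩
      exact ⟨hk', hHlt k', hHsol k'⟩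
  rw [hTeq]
  rw [Set.ncard_image_of_injOn (fun a _ b _ hab => congrArg Prod.fst hab)]
  rw [← Finset.coe_range, Set.ncard_coe_finset, Finset.card_range]
end

section
/- Let p and q be distinct odd primes, r, s ≥ 1 integers, and N = p^r q^s. Let D ∈ ℤ/Nℤ be such that its reduction modulo p is a non-square in ℤ/pℤ and its reduction modulo q is a non-square in ℤ/qℤ. Then for every (x,y) ∈ H_{D,ℤ/Nℤ}, the p^{r−1}(p+1)·q^{s−1}(q+1)-th ⊗-power of (x,y) equals (1,0). -/
/-!
Identify a point `(x, y)` with `z = x + y√D` in `R[√D] = QuadraticAlgebra R D 0`; the Pell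
product becomes multiplication and the conic becomes `N(z) = 1`. Over `ℤ/p^r` with `D` a
non-square mod `p`, Fermat and Euler's criterion give `z^p ≡ x - y√D = z̄ (mod p)`, so
`z^(p+1) ≡ z z̄ = 1 (mod p)`, and raising to the `p^(r-1)`-th power lifts this to
`z^(p^(r-1)(p+1)) = 1` modulo `p^r`. The Chinese remainder theorem combines the `p`- and
`q`-parts.
-/

open QuadraticAlgebra

section PellQuadraticAlgebra

variable {R : Type*} [CommRing R]

def pellToQuadraticAlgebra (D : R) (P : R × R) : QuadraticAlgebra R D 0 := ⟨P.1, P.2⟩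

lemma pellToQuadraticAlgebra_injective (D : R) : Function.Injective (pellToQuadraticAlgebra D) :=
  fun _ _ h => Prod.ext (congrArg QuadraticAlgebra.re h) (congrArg QuadraticAlgebra.im h)

lemma pellToQuadraticAlgebra_pellMul (D : R) (P Q : R × R) :
    pellToQuadraticAlgebra D (pellMul D P Q) =
      pellToQuadraticAlgebra D P * pellToQuadraticAlgebra D Q := by
  ext <;> simp [pellToQuadraticAlgebra, pellMul, add_comm]

lemma pellToQuadraticAlgebra_pellPow (D : R) (P : R × R) (n : ℕ) :
    pellToQuadraticAlgebra D (pellPow D P n) = pellToQuadraticAlgebra D P ^ n := by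
  induction n with
  | zero => rfl
  | succ n ih => rw [pellPow, pellToQuadraticAlgebra_pellMul, ih, pow_succ']

lemma pellToQuadraticAlgebra_one_zero (D : R) : pellToQuadraticAlgebra D (1, 0) = 1 := rfl

lemma norm_pellToQuadraticAlgebra (D : R) (P : R × R) :
    (pellToQuadraticAlgebra D P).norm = P.1 ^ 2 - D * P.2 ^ 2 := by
  simp [norm_def, pellToQuadraticAlgebra]; ring

end PellQuadraticAlgebra

namespace QuadraticAlgebra

variable {R : Type*} [CommRing R] {a : R} {p : ℕ}

lemma omega_pow_of_odd (hp : Odd p) :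
    (ω : QuadraticAlgebra R a 0) ^ p = algebraMap R _ (a ^ (p / 2)) * ω := by
  conv_lhs => rw [← Nat.two_mul_div_two_add_one_of_odd hp]
  rw [pow_succ, pow_mul, sq, omega_mul_omega_eq_algebraMap, map_zero, zero_mul, add_zero, map_pow]

lemma natCast_dvd_pow_sub_star (hp : p.Prime) (hp2 : p ≠ 2)
    (hfermat : ∀ c : R, (p : R) ∣ c ^ p - c) (ha : (p : R) ∣ a ^ (p / 2) + 1)
    (z : QuadraticAlgebra R a 0) : (p : QuadraticAlgebra R a 0) ∣ z ^ p - star z := by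
  set x := algebraMap R (QuadraticAlgebra R a 0) z.re
  set y := algebraMap R (QuadraticAlgebra R a 0) z.im
  have hz : z = x + y * ω := by ext <;> simp [x, y]
  have hstar : star z = x - y * ω := by ext <;> simp [x, y]
  obtain ⟨t, ht⟩ := exists_add_pow_prime_eq hp x (y * ω)
  rw [← hz] at ht
  have key : z ^ p - star z = algebraMap R _ (z.re ^ p - z.re) +
      (algebraMap R _ (z.im ^ p) * algebraMap R _ (a ^ (p / 2) + 1)
        - algebraMap R _ (z.im ^ p - z.im)) * ω +
      (p : QuadraticAlgebra R a 0) * (x * (y * ω) * t) := by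
    rw [hstar, ht, mul_pow, omega_pow_of_odd (hp.odd_of_ne_two hp2)]
    simp only [map_sub, map_add, map_pow, map_one, x, y]
    ring
  have hpmap : ∀ c : R, (p : R) ∣ c → (p : QuadraticAlgebra R a 0) ∣ algebraMap R _ c :=
    fun c hc => map_natCast (algebraMap R (QuadraticAlgebra R a 0)) p ▸ map_dvd _ hc
  rw [key]
  exact dvd_add (dvd_add (hpmap _ (hfermat _)) (dvd_mul_of_dvd_left (dvd_sub
    (dvd_mul_of_dvd_right (hpmap _ ha) _) (hpmap _ (hfermat _))) _)) (dvd_mul_right _ _)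

lemma pow_prime_pow_mul_succ_eq_one {b : R} {k : ℕ} (hpk : (p : R) ^ (k + 1) = 0)
    {z : QuadraticAlgebra R a b} (hz : z.norm = 1)
    (hfrob : (p : QuadraticAlgebra R a b) ∣ z ^ p - star z) :
    z ^ (p ^ k * (p + 1)) = 1 := by
  have hzstar : z * star z = 1 := by rw [← algebraMap_norm_eq_mul_star, hz, map_one]
  have hsucc : (p : QuadraticAlgebra R a b) ∣ z ^ (p + 1) - 1 := by
    rw [pow_succ', ← hzstar, ← mul_sub]
    exact dvd_mul_of_dvd_right hfrob z
  have hpk' : (p : QuadraticAlgebra R a b) ^ (k + 1) = 0 := by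
    rw [← map_natCast (algebraMap R (QuadraticAlgebra R a b)), ← map_pow, hpk, map_zero]
  have := dvd_sub_pow_of_dvd_sub hsucc k
  rw [hpk', zero_dvd_iff, one_pow, sub_eq_zero, ← pow_mul, mul_comm] at this
  exact this

end QuadraticAlgebra

namespace ZMod

lemma natCast_dvd_sub_of_castHom_eq {m n : ℕ} (h : m ∣ n) {a b : ZMod n}
    (hab : castHom h (ZMod m) a = castHom h (ZMod m) b) : (m : ZMod n) ∣ a - b := by
  have hzero : ((cast (a - b) : ℤ) : ZMod m) = 0 := by
    rw [intCast_cast, ← castHom_apply (h := h), map_sub, hab, sub_self]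
  obtain ⟨t, ht⟩ := (intCast_zmod_eq_zero_iff_dvd _ m).mp hzero
  refine ⟨t, ?_⟩
  rw [← intCast_zmod_cast (a - b), ht, Int.cast_mul, Int.cast_natCast]

lemma eq_of_castHom_eq_of_coprime {m n : ℕ} (hmn : m.Coprime n) {a b : ZMod (m * n)}
    (hm : castHom (dvd_mul_right m n) (ZMod m) a = castHom (dvd_mul_right m n) (ZMod m) b)
    (hn : castHom (dvd_mul_left n m) (ZMod n) a = castHom (dvd_mul_left n m) (ZMod n) b) :
    a = b := by
  have hcop : IsCoprime (m : ZMod (m * n)) n := by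
    simpa using (Nat.isCoprime_iff_coprime.mpr hmn).map (Int.castRingHom (ZMod (m * n)))
  have := hcop.mul_dvd (natCast_dvd_sub_of_castHom_eq _ hm) (natCast_dvd_sub_of_castHom_eq _ hn)
  rwa [← Nat.cast_mul, natCast_self, zero_dvd_iff, sub_eq_zero] at this

variable {n p : ℕ} [Fact p.Prime]

lemma natCast_dvd_pow_prime_sub (h : p ∣ n) (c : ZMod n) : (p : ZMod n) ∣ c ^ p - c :=
  natCast_dvd_sub_of_castHom_eq h (by rw [map_pow, pow_card])

lemma natCast_dvd_pow_div_two_add_one (h : p ∣ n) {D : ZMod n}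
    (hD : ∀ c : ZMod p, c ^ 2 ≠ castHom h (ZMod p) D) : (p : ZMod n) ∣ D ^ (p / 2) + 1 := by
  have hD0 : castHom h (ZMod p) D ≠ 0 := fun h0 => hD 0 (by rw [h0, zero_pow two_ne_zero])
  have hEuler : castHom h (ZMod p) D ^ (p / 2) = -1 := by
    refine (pow_div_two_eq_neg_one_or_one p hD0).resolve_left fun h1 => ?_
    obtain ⟨c, hc⟩ := (euler_criterion p hD0).mpr h1
    exact hD c (by rw [hc, sq])
  simpa using natCast_dvd_sub_of_castHom_eq h (a := D ^ (p / 2)) (b := -1)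
    (by rw [map_pow, map_neg, map_one, hEuler])

end ZMod

section Pell

variable {R : Type*} [CommRing R]

lemma map_pellPow {S : Type*} [CommRing S] (f : R →+* S) (D : R) (P : R × R) (n : ℕ) :
    Prod.map f f (pellPow D P n) = pellPow (f D) (Prod.map f f P) n := by
  induction n with
  | zero => simp [pellPow]
  | succ n ih => simp [pellPow, pellMul, ← ih]

lemma map_mem_pellConic {S : Type*} [CommRing S] (f : R →+* S) {D : R} {P : R × R}
    (hP : P ∈ pellConic D) : Prod.map f f P ∈ pellConic (f D) := by
  change f P.1 ^ 2 - f D * f P.2 ^ 2 = 1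
  rw [← map_pow, ← map_pow, ← map_mul, ← map_sub,
    show P.1 ^ 2 - D * P.2 ^ 2 = 1 from hP, map_one]

lemma pellPow_mul_eq_one_zero {D : R} {P : R × R} {m : ℕ} (h : pellPow D P m = (1, 0))
    (n : ℕ) : pellPow D P (m * n) = (1, 0) := by
  apply pellToQuadraticAlgebra_injective D
  rw [pellToQuadraticAlgebra_pellPow, pow_mul, ← pellToQuadraticAlgebra_pellPow, h,
    pellToQuadraticAlgebra_one_zero, one_pow]

theorem pellPow_eq_one_zero_of_nonsquare {p r : ℕ} (hp : p.Prime) (hp2 : p ≠ 2) (hr : r ≠ 0)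
    {D : ZMod (p ^ r)} (hD : ∀ c : ZMod p, c ^ 2 ≠ ZMod.castHom (dvd_pow_self p hr) (ZMod p) D)
    {P : ZMod (p ^ r) × ZMod (p ^ r)} (hP : P ∈ pellConic D) :
    pellPow D P (p ^ (r - 1) * (p + 1)) = (1, 0) := by
  have := Fact.mk hp
  have hpr : (p : ZMod (p ^ r)) ^ (r - 1 + 1) = 0 := by
    rw [Nat.sub_add_cancel (Nat.one_le_iff_ne_zero.mpr hr), ← Nat.cast_pow, ZMod.natCast_self]
  apply pellToQuadraticAlgebra_injective D
  rw [pellToQuadraticAlgebra_pellPow, pellToQuadraticAlgebra_one_zero]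
  refine pow_prime_pow_mul_succ_eq_one hpr ?_ (natCast_dvd_pow_sub_star hp hp2
    (ZMod.natCast_dvd_pow_prime_sub (dvd_pow_self p hr))
    (ZMod.natCast_dvd_pow_div_two_add_one _ hD) _)
  rw [norm_pellToQuadraticAlgebra]
  exact hP

end Pell

/-- Let `p, q` be distinct odd primes, `r, s ≥ 1`, `N = p^r q^s`, and
`D ∈ ℤ/Nℤ` reducing to a non-square modulo both `p` and `q`. Then every point of the
Pell conic over `ℤ/Nℤ` satisfies `(x,y)^{⊗ p^{r−1}(p+1) q^{s−1}(q+1)} = (1, 0)`. -/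
theorem pellPow_order_two_prime_powers (p q : ℕ) (hp : p.Prime) (hq : q.Prime)
    (hpq : p ≠ q) (hp2 : p ≠ 2) (hq2 : q ≠ 2) (r s : ℕ) (hr : 1 ≤ r) (hs : 1 ≤ s)
    (D : ZMod (p ^ r * q ^ s))
    (hDp : ∀ c : ZMod p, c ^ 2 ≠
      ZMod.castHom ((dvd_pow_self p (Nat.one_le_iff_ne_zero.mp hr)).mul_right (q ^ s))
        (ZMod p) D)
    (hDq : ∀ c : ZMod q, c ^ 2 ≠
      ZMod.castHom ((dvd_pow_self q (Nat.one_le_iff_ne_zero.mp hs)).mul_left (p ^ r))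
        (ZMod q) D) :
    ∀ P ∈ pellConic D,
      pellPow D P (p ^ (r - 1) * (p + 1) * (q ^ (s - 1) * (q + 1))) = (1, 0) := by
  intro P hP
  set f := ZMod.castHom (dvd_mul_right (p ^ r) (q ^ s)) (ZMod (p ^ r))
  set g := ZMod.castHom (dvd_mul_left (q ^ s) (p ^ r)) (ZMod (q ^ s))
  set m := p ^ (r - 1) * (p + 1)
  set n := q ^ (s - 1) * (q + 1)
  have hfP : pellPow (f D) (Prod.map f f P) m = (1, 0) :=
    pellPow_eq_one_zero_of_nonsquare hp hp2 (Nat.one_le_iff_ne_zero.mp hr)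
      (fun c => by rw [← RingHom.comp_apply, ZMod.castHom_comp]; exact hDp c)
      (map_mem_pellConic f hP)
  have hgP : pellPow (g D) (Prod.map g g P) n = (1, 0) :=
    pellPow_eq_one_zero_of_nonsquare hq hq2 (Nat.one_le_iff_ne_zero.mp hs)
      (fun c => by rw [← RingHom.comp_apply, ZMod.castHom_comp]; exact hDq c)
      (map_mem_pellConic g hP)
  have hf : Prod.map f f (pellPow D P (m * n)) = Prod.map f f (1, 0) := by
    rw [map_pellPow, pellPow_mul_eq_one_zero hfP]
    simp
  have hg : Prod.map g g (pellPow D P (m * n)) = Prod.map g g (1, 0) := by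
    rw [map_pellPow, Nat.mul_comm m, pellPow_mul_eq_one_zero hgP]
    simp
  have hcop : (p ^ r).Coprime (q ^ s) := ((Nat.coprime_primes hp hq).mpr hpq).pow r s
  exact Prod.ext
    (ZMod.eq_of_castHom_eq_of_coprime hcop (congrArg Prod.fst hf) (congrArg Prod.fst hg))
    (ZMod.eq_of_castHom_eq_of_coprime hcop (congrArg Prod.snd hf) (congrArg Prod.snd hg))
end

section
/- Let N be an odd integer > 1 and D ∈ ℤ/Nℤ such that for every prime p dividing N the reduction of D modulo p is a non-square in ℤ/pℤ. Define H*_{D,ℤ/Nℤ} = {(x,y) ∈ (ℤ/Nℤ)² : x² − D y² = 1, y is a unit, and x + 1 is a unit}. Then the map Φ_D(x,y) = (1 + x)·y^{−1} sends H*_{D,ℤ/Nℤ} into the unit group (ℤ/Nℤ)*, the map Φ_D^{−1}(m) = ((m² + D)(m² − D)^{−1}, 2m(m² − D)^{−1}) sends (ℤ/Nℤ)* into H*_{D,ℤ/Nℤ}, and these two maps are mutually inverse bijections between H*_{D,ℤ/Nℤ} and (ℤ/Nℤ)*; in particular Φ_D and Φ_D^{−1} are injective on these sets and |H*_{D,ℤ/Nℤ}|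 = |(ℤ/Nℤ)*|. -/
/-- The subset `H*_{D,ℤ/Nℤ}` of the Pell conic on which the parametrization map is
defined: points `(x, y)` with `x² − D y² = 1`, `y` a unit, and `x + 1` a unit. -/
def pellHStar (N : ℕ) (D : ZMod N) : Set (ZMod N × ZMod N) :=
  {P | P.1 ^ 2 - D * P.2 ^ 2 = 1 ∧ IsUnit P.2 ∧ IsUnit (P.1 + 1)}

/-- The map `Φ_D(x, y) = (1 + x)·y⁻¹` (with `y⁻¹` the ring inverse of the unit `y`). -/
noncomputable def pellPhiZ (N : ℕ) (P : ZMod N × ZMod N) : ZMod N :=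
  (1 + P.1) * Ring.inverse P.2

/-- The map `Φ_D⁻¹(m) = ((m² + D)(m² − D)⁻¹, 2m(m² − D)⁻¹)`. -/
noncomputable def pellPsiZ (N : ℕ) (D m : ZMod N) : ZMod N × ZMod N :=
  ((m ^ 2 + D) * Ring.inverse (m ^ 2 - D), 2 * m * Ring.inverse (m ^ 2 - D))

/-- An element of `ZMod N` all of whose reductions mod primes dividing `N` are nonzero
is a unit. -/
lemma isUnit_of_forall_prime_cast_ne_zero (N : ℕ) (hN1 : 1 < N) (a : ZMod N)
    (h : ∀ (q : ℕ) (_ : q.Prime) (hd : q ∣ N), ZMod.castHom hd (ZMod q) a ≠ 0) :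
    IsUnit a := by
  haveI : NeZero N := ⟨by omega⟩
  have hval : ((a.val : ℕ) : ZMod N) = a := ZMod.natCast_rightInverse a
  rw [← hval, ZMod.isUnit_iff_coprime]
  by_contra hc
  obtain ⟨q, hq, hq1, hq2⟩ := Nat.Prime.not_coprime_iff_dvd.mp hc
  refine h q hq hq2 ?_
  have : ZMod.castHom hq2 (ZMod q) a = ((a.val : ℕ) : ZMod q) := by
    rw [← hval]; simp
  rw [this]
  exact (ZMod.natCast_eq_zero_iff _ _).mpr hq1

/-- Let `N > 1` be odd and `D ∈ ℤ/Nℤ` reduce to a non-square modulo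
every prime `p ∣ N`. Then `Φ_D` maps `H*_{D,ℤ/Nℤ}` into `(ℤ/Nℤ)*`, `Φ_D⁻¹` maps
`(ℤ/Nℤ)*` into `H*_{D,ℤ/Nℤ}`, these maps are mutually inverse bijections; in particular
they are injective on these sets and `|H*_{D,ℤ/Nℤ}| = |(ℤ/Nℤ)*|`. -/
theorem pellPhiZ_bijection (N : ℕ) (hN1 : 1 < N) (hNodd : Odd N) (D : ZMod N)
    (hD : ∀ (q : ℕ) (hq : q.Prime) (h : q ∣ N),
      ∀ c : ZMod q, c ^ 2 ≠ ZMod.castHom h (ZMod q) D) :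
    (∀ P ∈ pellHStar N D, IsUnit (pellPhiZ N P)) ∧
    (∀ m : ZMod N, IsUnit m → pellPsiZ N D m ∈ pellHStar N D) ∧
    (∀ m : ZMod N, IsUnit m → pellPhiZ N (pellPsiZ N D m) = m) ∧
    (∀ P ∈ pellHStar N D, pellPsiZ N D (pellPhiZ N P) = P) ∧
    Set.InjOn (pellPhiZ N) (pellHStar N D) ∧
    Set.InjOn (pellPsiZ N D) {m : ZMod N | IsUnit m} ∧
    Nat.card (pellHStar N D) = Nat.card (ZMod N)ˣ := by
  -- `2` is a unit
  have h2 : IsUnit (2 : ZMod N) := by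
    have := (ZMod.isUnit_iff_coprime 2 N).mpr (Nat.coprime_two_left.mpr hNodd)
    simpa using this
  -- `m ^ 2 - D` is a unit for all `m`
  have hMD : ∀ m : ZMod N, IsUnit (m ^ 2 - D) := by
    intro m
    refine isUnit_of_forall_prime_cast_ne_zero N hN1 _ ?_
    intro q hq hd
    have := hD q hq hd (ZMod.castHom hd (ZMod q) m)
    simp only [map_sub, map_pow]
    exact sub_ne_zero.mpr this
  -- Φ maps into units
  have hPhiUnit : ∀ P ∈ pellHStar N D, IsUnit (pellPhiZ N P) := by
    rintro ⟨x, y⟩ ⟨hP0, hy, hx10⟩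
    have hx1 : IsUnit (x + 1) := hx10
    obtain ⟨Y, hY0⟩ := hy
    have hY : (↑Y : ZMod N) = y := hY0
    show IsUnit ((1 + x) * Ring.inverse y)
    rw [← hY, Ring.inverse_unit]
    exact (by rwa [add_comm] at hx1 : IsUnit (1 + x)).mul (Units.isUnit _)
  -- ψ maps units into H*
  have hPsiMem : ∀ m : ZMod N, IsUnit m → pellPsiZ N D m ∈ pellHStar N D := by
    intro m hm
    obtain ⟨U, hU⟩ := (hMD m)
    have hinv : Ring.inverse (m ^ 2 - D) = (↑U⁻¹ : ZMod N) := by rw [← hU, Ring.inverse_unit]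
    have hUU : (↑U : ZMod N) * ↑U⁻¹ = 1 := U.mul_inv
    refine ⟨?_, ?_, ?_⟩
    · show ((m ^ 2 + D) * Ring.inverse (m ^ 2 - D)) ^ 2 -
        D * (2 * m * Ring.inverse (m ^ 2 - D)) ^ 2 = 1
      rw [hinv]
      have key : ((m ^ 2 + D)) ^ 2 - D * (2 * m) ^ 2 = (↑U : ZMod N) ^ 2 := by
        rw [hU]; ring
      calc ((m ^ 2 + D) * ↑U⁻¹) ^ 2 - D * (2 * m * ↑U⁻¹) ^ 2
          = (((m ^ 2 + D)) ^ 2 - D * (2 * m) ^ 2) * (↑U⁻¹ : ZMod N) ^ 2 := by ring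
        _ = (↑U : ZMod N) ^ 2 * (↑U⁻¹ : ZMod N) ^ 2 := by rw [key]
        _ = 1 := by rw [← mul_pow, hUU, one_pow]
    · show IsUnit (2 * m * Ring.inverse (m ^ 2 - D))
      rw [hinv]
      exact (h2.mul hm).mul (Units.isUnit _)
    · show IsUnit ((m ^ 2 + D) * Ring.inverse (m ^ 2 - D) + 1)
      have : (m ^ 2 + D) * Ring.inverse (m ^ 2 - D) + 1 = 2 * m ^ 2 * ↑U⁻¹ := by
        rw [hinv]
        calc (m ^ 2 + D) * ↑U⁻¹ + 1 = (m ^ 2 + D) * ↑U⁻¹ + ↑U * ↑U⁻¹ := by rw [hUU]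
          _ = ((m ^ 2 + D) + ↑U) * ↑U⁻¹ := by ring
          _ = 2 * m ^ 2 * ↑U⁻¹ := by rw [hU]; ring_nf
      rw [this]
      exact (h2.mul (hm.pow 2)).mul (Units.isUnit _)
  -- Φ ∘ ψ = id on units
  have hPhiPsi : ∀ m : ZMod N, IsUnit m → pellPhiZ N (pellPsiZ N D m) = m := by
    intro m hm
    obtain ⟨U, hU⟩ := (hMD m)
    have hinv : Ring.inverse (m ^ 2 - D) = (↑U⁻¹ : ZMod N) := by rw [← hU, Ring.inverse_unit]
    have hUU : (↑U : ZMod N) * ↑U⁻¹ = 1 := U.mul_inv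
    have hyu : IsUnit (2 * m * Ring.inverse (m ^ 2 - D)) := (hPsiMem m hm).2.1
    obtain ⟨Y, hY⟩ := hyu
    have hinvY : Ring.inverse (2 * m * Ring.inverse (m ^ 2 - D)) = (↑Y⁻¹ : ZMod N) := by
      rw [← hY, Ring.inverse_unit]
    show (1 + (m ^ 2 + D) * Ring.inverse (m ^ 2 - D)) *
        Ring.inverse (2 * m * Ring.inverse (m ^ 2 - D)) = m
    rw [hinvY, Units.mul_inv_eq_iff_eq_mul, hY, hinv]
    calc 1 + (m ^ 2 + D) * ↑U⁻¹ = ↑U * ↑U⁻¹ + (m ^ 2 + D) * ↑U⁻¹ := by rw [hUU]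
      _ = (↑U + (m ^ 2 + D)) * ↑U⁻¹ := by ring
      _ = (2 * m ^ 2) * ↑U⁻¹ := by rw [hU]; ring_nf
      _ = m * (2 * m * ↑U⁻¹) := by ring
  -- ψ ∘ Φ = id on H*
  have hPsiPhi : ∀ P ∈ pellHStar N D, pellPsiZ N D (pellPhiZ N P) = P := by
    rintro ⟨x, y⟩ ⟨hP0, hy, hx10⟩
    have hP : x ^ 2 - D * y ^ 2 = 1 := hP0
    obtain ⟨Y, hY0⟩ := hy
    have hY : (↑Y : ZMod N) = y := hY0
    have hinvy : Ring.inverse y = (↑Y⁻¹ : ZMod N) := by rw [← hY, Ring.inverse_unit]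
    have hYY : (↑Y : ZMod N) * ↑Y⁻¹ = 1 := Y.mul_inv
    set m : ZMod N := (1 + x) * Ring.inverse y with hm
    have hmdef : m = (1 + x) * ↑Y⁻¹ := by rw [hm, hinvy]
    obtain ⟨U, hU⟩ := (hMD m)
    have hinv : Ring.inverse (m ^ 2 - D) = (↑U⁻¹ : ZMod N) := by rw [← hU, Ring.inverse_unit]
    have hUU : (↑U : ZMod N) * ↑U⁻¹ = 1 := U.mul_inv
    have hDy : D * y ^ 2 = x ^ 2 - 1 := by linear_combination -hP
    have hsq : ((1 + x) * (↑Y⁻¹ : ZMod N)) ^ 2 * y ^ 2 = (1 + x) ^ 2 := by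
      rw [← hY]
      calc ((1 + x) * ↑Y⁻¹) ^ 2 * (↑Y : ZMod N) ^ 2
          = (1 + x) ^ 2 * ((↑Y : ZMod N) * ↑Y⁻¹) ^ 2 := by ring
        _ = (1 + x) ^ 2 := by rw [hYY]; ring
    have hkey : (↑U : ZMod N) * y ^ 2 = 2 * (1 + x) := by
      rw [hU, hmdef]
      calc (((1 + x) * ↑Y⁻¹) ^ 2 - D) * y ^ 2
          = ((1 + x) * ↑Y⁻¹) ^ 2 * y ^ 2 - D * y ^ 2 := by ring
        _ = (1 + x) ^ 2 - (x ^ 2 - 1) := by rw [hsq, hDy]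
        _ = 2 * (1 + x) := by ring
    have hkey2 : (m ^ 2 + D) * y ^ 2 = 2 * x * (1 + x) := by
      rw [hmdef]
      calc (((1 + x) * ↑Y⁻¹) ^ 2 + D) * y ^ 2
          = ((1 + x) * ↑Y⁻¹) ^ 2 * y ^ 2 + D * y ^ 2 := by ring
        _ = (1 + x) ^ 2 + (x ^ 2 - 1) := by rw [hsq, hDy]
        _ = 2 * x * (1 + x) := by ring
    show ((m ^ 2 + D) * Ring.inverse (m ^ 2 - D), 2 * m * Ring.inverse (m ^ 2 - D)) = (x, y)
    refine Prod.ext ?_ ?_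
    · show (m ^ 2 + D) * Ring.inverse (m ^ 2 - D) = x
      rw [hinv, Units.mul_inv_eq_iff_eq_mul, hU]
      have hcanc : ((m ^ 2 + D) - x * (m ^ 2 - D)) * (y ^ 2) = 0 := by
        calc ((m ^ 2 + D) - x * (m ^ 2 - D)) * y ^ 2
            = (m ^ 2 + D) * y ^ 2 - x * ((m ^ 2 - D) * y ^ 2) := by ring
          _ = 2 * x * (1 + x) - x * (2 * (1 + x)) := by rw [hkey2, ← hU, hkey]
          _ = 0 := by ring
      have := (IsUnit.pow 2 ⟨Y, hY⟩).mul_left_eq_zero.mp (by rwa [mul_comm] at hcanc)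
      linear_combination this
    · show 2 * m * Ring.inverse (m ^ 2 - D) = y
      rw [hinv, Units.mul_inv_eq_iff_eq_mul, hU]
      have h2m : 2 * m * y = 2 * (1 + x) := by
        rw [hmdef, ← hY]
        calc 2 * ((1 + x) * ↑Y⁻¹) * ↑Y = 2 * (1 + x) * (↑Y * ↑Y⁻¹) := by ring
          _ = 2 * (1 + x) := by rw [hYY]; ring
      have hcanc : (2 * m - y * (m ^ 2 - D)) * y = 0 := by
        calc (2 * m - y * (m ^ 2 - D)) * y
            = 2 * m * y - ((m ^ 2 - D) * y ^ 2) := by ring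
          _ = 2 * (1 + x) - 2 * (1 + x) := by rw [h2m, ← hU, hkey]
          _ = 0 := by ring
      have := (show IsUnit y from ⟨Y, hY⟩).mul_left_eq_zero.mp (by rwa [mul_comm] at hcanc)
      linear_combination this
  refine ⟨hPhiUnit, hPsiMem, hPhiPsi, hPsiPhi, ?_, ?_, ?_⟩
  · intro P hP Q hQ h
    rw [← hPsiPhi P hP, ← hPsiPhi Q hQ, h]
  · intro a ha b hb h
    rw [← hPhiPsi a ha, ← hPhiPsi b hb, h]
  · have hbij : Set.BijOn (pellPhiZ N) (pellHStar N D) {m : ZMod N | IsUnit m} := by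
      refine ⟨fun P hP => hPhiUnit P hP, fun P hP Q hQ h => by
        rw [← hPsiPhi P hP, ← hPsiPhi Q hQ, h], ?_⟩
      intro m hm
      exact ⟨pellPsiZ N D m, hPsiMem m hm, hPhiPsi m hm⟩
    have e1 := hbij.equiv _
    have e2 : (ZMod N)ˣ ≃ {m : ZMod N | IsUnit m} :=
      { toFun := fun u => ⟨(u : ZMod N), u.isUnit⟩
        invFun := fun m => m.2.unit
        left_inv := fun u => Units.ext (IsUnit.unit_spec u.isUnit)
        right_inv := fun m => Subtype.ext (IsUnit.unit_spec m.2) }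
    rw [Nat.card_congr e1, Nat.card_congr e2.symm]
end

section
/- Let p₁, …, p_r be distinct odd primes, e₁, …, e_r ≥ 1 integers, and N = p₁^{e₁}·…·p_r^{e_r}. Let D ∈ ℤ/Nℤ be such that its reduction modulo p_i is a non-square in ℤ/p_iℤ for each i. Let L = lcm(p₁^{e₁−1}(p₁+1), …, p_r^{e_r−1}(p_r+1)), and let e, d be positive integers with e·d ≡ 1 (mod L). Then for every (x,y) ∈ H_{D,ℤ/Nℤ}, the d-th ⊗-power of the e-th ⊗-power of (x,y) equals (x,y), i.e. ((x,y)^{⊗e})^{⊗d} = (x,y); in other words decryption in the proposed scheme recovers the plaintext. -/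
namespace PellAux

/-- The quadratic ring `R[√D]`. -/
@[ext]
structure Quad (R : Type*) (D : R) where
  re : R
  im : R

namespace Quad

variable {R : Type*} [CommRing R] {D : R}

instance : Zero (Quad R D) := ⟨⟨0, 0⟩⟩
instance : One (Quad R D) := ⟨⟨1, 0⟩⟩
instance : Add (Quad R D) := ⟨fun z w => ⟨z.re + w.re, z.im + w.im⟩⟩
instance : Neg (Quad R D) := ⟨fun z => ⟨-z.re, -z.im⟩⟩
instance : Mul (Quad R D) :=
  ⟨fun z w => ⟨z.re * w.re + D * z.im * w.im, z.re * w.im + z.im * w.re⟩⟩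

@[simp] theorem zero_re : (0 : Quad R D).re = 0 := rfl
@[simp] theorem zero_im : (0 : Quad R D).im = 0 := rfl
@[simp] theorem one_re : (1 : Quad R D).re = 1 := rfl
@[simp] theorem one_im : (1 : Quad R D).im = 0 := rfl
@[simp] theorem add_re (z w : Quad R D) : (z + w).re = z.re + w.re := rfl
@[simp] theorem add_im (z w : Quad R D) : (z + w).im = z.im + w.im := rfl
@[simp] theorem neg_re (z : Quad R D) : (-z).re = -z.re := rfl
@[simp] theorem neg_im (z : Quad R D) : (-z).im = -z.im := rfl
@[simp] theorem mul_re (z w : Quad R D) :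
    (z * w).re = z.re * w.re + D * z.im * w.im := rfl
@[simp] theorem mul_im (z w : Quad R D) :
    (z * w).im = z.re * w.im + z.im * w.re := rfl

instance addCommGroup : AddCommGroup (Quad R D) := by
  refine
  { add := (· + ·)
    zero := (0 : Quad R D)
    sub := fun a b => a + -b
    neg := Neg.neg
    nsmul := @nsmulRec (Quad R D) ⟨0⟩ ⟨(· + ·)⟩
    zsmul := @zsmulRec (Quad R D) ⟨0⟩ ⟨(· + ·)⟩ ⟨Neg.neg⟩ (@nsmulRec (Quad R D) ⟨0⟩ ⟨(· + ·)⟩)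
    add_assoc := ?_
    zero_add := ?_
    add_zero := ?_
    neg_add_cancel := ?_
    add_comm := ?_ } <;>
  intros <;>
  ext <;>
  simp <;>
  ring

@[simp] theorem sub_re (z w : Quad R D) : (z - w).re = z.re - w.re := by
  simp [sub_eq_add_neg]
@[simp] theorem sub_im (z w : Quad R D) : (z - w).im = z.im - w.im := by
  simp [sub_eq_add_neg]

instance : NatCast (Quad R D) := ⟨fun n => ⟨(n : R), 0⟩⟩
instance : IntCast (Quad R D) := ⟨fun n => ⟨(n : R), 0⟩⟩

@[simp] theorem natCast_re (n : ℕ) : ((n : ℕ) : Quad R D).re = n := rfl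
@[simp] theorem natCast_im (n : ℕ) : ((n : ℕ) : Quad R D).im = 0 := rfl
@[simp] theorem intCast_re (n : ℤ) : ((n : ℤ) : Quad R D).re = n := rfl
@[simp] theorem intCast_im (n : ℤ) : ((n : ℤ) : Quad R D).im = 0 := rfl

instance addGroupWithOne : AddGroupWithOne (Quad R D) :=
  { Quad.addCommGroup with
    natCast := (Nat.cast : ℕ → Quad R D)
    intCast := (Int.cast : ℤ → Quad R D)
    natCast_zero := by ext <;> simp
    natCast_succ := fun n => by ext <;> simp
    intCast_ofNat := fun n => by ext <;> simp
    intCast_negSucc := fun n => by ext <;> simp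
    one := 1 }

instance commRing : CommRing (Quad R D) := by
  refine
  { Quad.addGroupWithOne with
    mul := (· * ·)
    npow := @npowRec (Quad R D) ⟨1⟩ ⟨(· * ·)⟩,
    add_comm := ?_
    left_distrib := ?_
    right_distrib := ?_
    zero_mul := ?_
    mul_zero := ?_
    mul_assoc := ?_
    one_mul := ?_
    mul_one := ?_
    mul_comm := ?_ } <;>
  intros <;>
  ext <;>
  simp <;>
  ring

/-- The embedding `R × R → Quad R D`. -/
def q (P : R × R) : Quad R D := ⟨P.1, P.2⟩

theorem q_inj : Function.Injective (q (R := R) (D := D)) := by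
  rintro ⟨a, b⟩ ⟨c, d⟩ h
  simpa [q, Quad.ext_iff, Prod.ext_iff] using h

@[simp] theorem q_one : (q (1, 0) : Quad R D) = 1 := rfl

theorem q_mul (P Q : R × R) : (q (pellMul D P Q) : Quad R D) = q P * q Q := by
  ext <;> simp [q, pellMul] <;> ring

theorem q_pow (P : R × R) (n : ℕ) : (q (pellPow D P n) : Quad R D) = (q P) ^ n := by
  induction n with
  | zero => simp [pellPow]
  | succ n ih =>
    rw [show pellPow D P (n + 1) = pellMul D P (pellPow D P n) from rfl, q_mul, ih,
      pow_succ]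
    ring

theorem mk_zero_pow (a : R) (n : ℕ) : (⟨a, 0⟩ : Quad R D) ^ n = ⟨a ^ n, 0⟩ := by
  induction n with
  | zero => apply Quad.ext <;> simp
  | succ n ih => rw [pow_succ, pow_succ, ih]; apply Quad.ext <;> simp

end Quad

open Quad

variable {R : Type*} [CommRing R]

theorem pellPow_mul (D : R) (P : R × R) (m n : ℕ) :
    pellPow D P (m * n) = pellPow D (pellPow D P m) n :=
  q_inj (by rw [q_pow, q_pow, q_pow, pow_mul])

theorem pellPow_one (D : R) (P : R × R) : pellPow D P 1 = P :=
  q_inj (by rw [q_pow, pow_one])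

theorem pellPow_oneZero (D : R) (n : ℕ) : pellPow D ((1 : R), (0 : R)) n = (1, 0) :=
  q_inj (by rw [q_pow, q_one, one_pow])

theorem pellMap_pow {R' : Type*} [CommRing R'] (f : R →+* R') (D : R) (P : R × R) (n : ℕ) :
    (f (pellPow D P n).1, f (pellPow D P n).2) =
      pellPow (f D) (f P.1, f P.2) n := by
  induction n with
  | zero => simp [pellPow]
  | succ n ih =>
    show (f (pellMul D P (pellPow D P n)).1, f (pellMul D P (pellPow D P n)).2) =
      pellMul (f D) (f P.1, f P.2) (pellPow (f D) (f P.1, f P.2) n)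
    rw [← ih]
    simp [pellMul, map_add, map_mul]


theorem pellPow_add (D : R) (P : R × R) (m n : ℕ) :
    pellPow D P (m + n) = pellMul D (pellPow D P m) (pellPow D P n) :=
  q_inj (by rw [q_mul, q_pow, q_pow, q_pow, pow_add])

/-- Binomial divisibility step. -/
theorem dvd_pow_sub_one {S : Type*} [CommRing S] (P k : ℕ) (hk : 1 ≤ k) (v : S)
    (h : (P : S) ^ k ∣ v - 1) : (P : S) ^ (k + 1) ∣ v ^ P - 1 := by
  obtain ⟨w, hw⟩ := h
  have hv : v = (P : S) ^ k * w + 1 := by linear_combination hw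
  rw [hv, add_pow]
  rw [Finset.sum_range_succ']
  simp only [pow_zero, one_mul, one_pow, Nat.choose_zero_right, Nat.cast_one, mul_one,
    Nat.sub_zero, add_sub_cancel_right]
  apply Finset.dvd_sum
  intro i _
  rcases Nat.eq_zero_or_pos i with h0 | h1
  · subst h0
    rw [Nat.choose_one_right, pow_one]
    exact ⟨w, by push_cast; ring⟩
  · have hki : 1 ≤ k * i := Nat.one_le_iff_ne_zero.mpr
      (Nat.mul_ne_zero (by omega) (by omega))
    have hle : k + 1 ≤ k * (i + 1) := by rw [Nat.mul_succ]; omega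
    have h1' : (P : S) ^ (k + 1) ∣ ((P : S) ^ k) ^ (i + 1) := by
      rw [← pow_mul]; exact pow_dvd_pow _ hle
    exact h1'.trans ((pow_dvd_pow_of_dvd (dvd_mul_right _ w) (i + 1)).trans
      (dvd_mul_right _ _))

/-- Lifting-the-exponent style lemma: if `u ≡ 1 mod P` and `P^(m+1) = 0`, then
`u ^ (P^m) = 1`. -/
theorem pow_eq_one_of_dvd {S : Type*} [CommRing S] (P : ℕ) (u : S)
    (h : (P : S) ∣ u - 1) (m : ℕ) (hm : (P : S) ^ (m + 1) = 0) :
    u ^ (P ^ m) = 1 := by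
  have key : ∀ j : ℕ, (P : S) ^ (j + 1) ∣ u ^ (P ^ j) - 1 := by
    intro j
    induction j with
    | zero => simpa using h
    | succ j ih =>
      have := dvd_pow_sub_one P (j + 1) (by omega) (u ^ (P ^ j)) ih
      rwa [← pow_mul, ← pow_succ] at this
  have hk := key m
  rw [hm, zero_dvd_iff, sub_eq_zero] at hk
  exact hk

theorem val_dvd_of_cast_eq_zero {n m : ℕ} [NeZero n] [NeZero m] (h : m ∣ n) (x : ZMod n)
    (hx : ZMod.castHom h (ZMod m) x = 0) : m ∣ x.val := by
  rwa [ZMod.castHom_apply, ← ZMod.natCast_val, ZMod.natCast_eq_zero_iff] at hx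

theorem dvd_of_cast_eq_zero {n m : ℕ} [NeZero n] [NeZero m] (h : m ∣ n) (x : ZMod n)
    (hx : ZMod.castHom h (ZMod m) x = 0) : (m : ZMod n) ∣ x := by
  obtain ⟨c, hc⟩ := val_dvd_of_cast_eq_zero h x hx
  refine ⟨(c : ZMod n), ?_⟩
  have hxx : ((x.val : ℕ) : ZMod n) = x := by rw [ZMod.natCast_val, ZMod.cast_id]
  rw [← hxx, hc]
  push_cast
  ring

/-- Over `ZMod p` with `D` a non-square, every point of the conic is killed by `p+1`. -/
theorem field_case (P : ℕ) (hp : P.Prime) (hp2 : P ≠ 2) (D : ZMod P)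
    (hD : ∀ c : ZMod P, c ^ 2 ≠ D) :
    ∀ Q ∈ pellConic D, pellPow D Q (P + 1) = (1, 0) := by
  haveI : Fact P.Prime := ⟨hp⟩
  haveI : CharP (Quad (ZMod P) D) P := by
    constructor
    intro n
    constructor
    · intro h
      have h' := congrArg Quad.re h
      simp only [natCast_re, zero_re] at h'
      exact (ZMod.natCast_eq_zero_iff n P).mp h'
    · intro h
      apply Quad.ext <;> simp [(ZMod.natCast_eq_zero_iff n P).mpr h]
  intro Q hQ
  have hQ' : Q.1 ^ 2 - D * Q.2 ^ 2 = 1 := hQ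
  have hodd : P = 2 * (P / 2) + 1 := by
    have h1 := hp.two_le
    have h2 : P % 2 = 1 := Nat.odd_iff.mp (hp.odd_of_ne_two hp2)
    omega
  have hD0 : D ≠ 0 := fun h => hD 0 (by simp [h])
  have hEuler : D ^ (P / 2) = -1 := by
    have h1 : D ^ (P - 1) = 1 := ZMod.pow_card_sub_one_eq_one hD0
    have h2 : D ^ (P / 2) * D ^ (P / 2) = 1 := by
      rw [← pow_add, show P / 2 + P / 2 = P - 1 by omega]
      exact h1
    rcases mul_self_eq_one_iff.mp h2 with h | h
    · exfalso
      obtain ⟨c, hc⟩ := (ZMod.euler_criterion P hD0).mpr h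
      exact hD c (by rw [sq]; exact hc.symm)
    · exact h
  apply q_inj
  rw [q_pow, q_one]
  have hsplit : (q Q : Quad (ZMod P) D) = (⟨Q.1, 0⟩ : Quad (ZMod P) D) + ⟨Q.2, 0⟩ * ⟨0, 1⟩ := by
    apply Quad.ext <;> simp [q]
  have hC : ∀ (a : ZMod P) (n : ℕ), (⟨a, 0⟩ : Quad (ZMod P) D) ^ n = ⟨a ^ n, 0⟩ := by
    intro a n
    induction n with
    | zero => apply Quad.ext <;> simp
    | succ n ih => rw [pow_succ, pow_succ, ih]; apply Quad.ext <;> simp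
  have hroot2 : (⟨0, 1⟩ : Quad (ZMod P) D) ^ 2 = ⟨D, 0⟩ := by
    rw [sq]; apply Quad.ext <;> simp
  have hroot : (⟨0, 1⟩ : Quad (ZMod P) D) ^ P = ⟨0, -1⟩ := by
    calc (⟨0, 1⟩ : Quad (ZMod P) D) ^ P
        = ((⟨0, 1⟩ : Quad (ZMod P) D) ^ 2) ^ (P / 2) * ⟨0, 1⟩ := by
          rw [← pow_mul, ← pow_succ]; congr 1 <;> omega
      _ = (⟨D ^ (P / 2), 0⟩ : Quad (ZMod P) D) * ⟨0, 1⟩ := by rw [hroot2, hC]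
      _ = ⟨0, -1⟩ := by rw [hEuler]; apply Quad.ext <;> simp
  have hfrob : (q Q : Quad (ZMod P) D) ^ P = ⟨Q.1, -Q.2⟩ := by
    rw [hsplit, add_pow_char, mul_pow, hC, hC, hroot, ZMod.pow_card, ZMod.pow_card]
    apply Quad.ext <;> simp
  rw [pow_succ, hfrob]
  apply Quad.ext
  · simp [q]; linear_combination hQ'
  · simp [q]; ring

/-- Over `ZMod (p^E)` with `D` a non-square mod `p`, every point of the conic is killed
by `p^(E-1)*(p+1)`. -/
theorem prime_pow_case (P E : ℕ) (hp : P.Prime) (hp2 : P ≠ 2) (hE : 1 ≤ E)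
    (D : ZMod (P ^ E))
    (hD : ∀ c : ZMod P, c ^ 2 ≠
      ZMod.castHom (dvd_pow_self P (Nat.one_le_iff_ne_zero.mp hE)) (ZMod P) D) :
    ∀ Q ∈ pellConic D, pellPow D Q (P ^ (E - 1) * (P + 1)) = (1, 0) := by
  haveI : Fact P.Prime := ⟨hp⟩
  haveI : NeZero P := ⟨hp.pos.ne'⟩
  haveI : NeZero (P ^ E) := ⟨pow_ne_zero E hp.pos.ne'⟩
  intro Q hQ
  set f := ZMod.castHom (dvd_pow_self P (Nat.one_le_iff_ne_zero.mp hE)) (ZMod P) with hf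
  have hQ1 : (f Q.1, f Q.2) ∈ pellConic (f D) := by
    have hQ' : Q.1 ^ 2 - D * Q.2 ^ 2 = 1 := hQ
    have := congrArg f hQ'
    rw [map_sub, map_mul, map_pow, map_pow, map_one] at this
    exact this
  have hfield := field_case P hp hp2 (f D) (fun c => hD c) (f Q.1, f Q.2) hQ1
  set R2 := pellPow D Q (P + 1) with hR2
  have hcast : (f R2.1, f R2.2) = ((1 : ZMod P), (0 : ZMod P)) := by
    rw [hR2, pellMap_pow f D Q (P + 1)]
    exact hfield
  have h1 : (P : ZMod (P ^ E)) ∣ R2.1 - 1 := by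
    apply dvd_of_cast_eq_zero (dvd_pow_self P (Nat.one_le_iff_ne_zero.mp hE))
    rw [map_sub, map_one]
    have : f R2.1 = 1 := congrArg Prod.fst hcast
    rw [this, sub_self]
  have h2 : (P : ZMod (P ^ E)) ∣ R2.2 := by
    apply dvd_of_cast_eq_zero (dvd_pow_self P (Nat.one_le_iff_ne_zero.mp hE))
    exact congrArg Prod.snd hcast
  have hq : (P : Quad (ZMod (P ^ E)) D) ∣ (q R2 : Quad (ZMod (P ^ E)) D) - 1 := by
    obtain ⟨a, ha⟩ := h1
    obtain ⟨b, hb⟩ := h2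
    refine ⟨⟨a, b⟩, ?_⟩
    apply Quad.ext <;> simp [q, ha, hb]
  have hm : (P : Quad (ZMod (P ^ E)) D) ^ ((E - 1) + 1) = 0 := by
    have h0 : ((P : ℕ) : Quad (ZMod (P ^ E)) D) = ⟨((P : ℕ) : ZMod (P ^ E)), 0⟩ := rfl
    rw [show (E - 1) + 1 = E by omega, h0, mk_zero_pow]
    have hz : ((P : ℕ) : ZMod (P ^ E)) ^ E = 0 := by
      rw [← Nat.cast_pow, ZMod.natCast_self]
    rw [hz]
    apply Quad.ext <;> simp
  have hone := pow_eq_one_of_dvd P (q R2 : Quad (ZMod (P ^ E)) D) hq (E - 1) hm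
  have hR2one : pellPow D R2 (P ^ (E - 1)) = (1, 0) :=
    q_inj (by rw [q_pow, hone, q_one])
  rw [mul_comm, pellPow_mul, ← hR2]
  exact hR2one

theorem nat_prod_dvd {ι : Type*} (s : Finset ι) (f : ι → ℕ) (n : ℕ)
    (hc : ∀ i ∈ s, ∀ j ∈ s, i ≠ j → Nat.Coprime (f i) (f j))
    (h : ∀ i ∈ s, f i ∣ n) : (∏ i ∈ s, f i) ∣ n := by
  classical
  induction s using Finset.induction with
  | empty => simpa using one_dvd n
  | @insert a s hnot ih =>
    rw [Finset.prod_insert hnot]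
    refine Nat.Coprime.mul_dvd_of_dvd_of_dvd ?_ (h a (Finset.mem_insert_self a s)) ?_
    · refine Nat.Coprime.prod_right fun j hj => ?_
      exact hc a (Finset.mem_insert_self a s) j (Finset.mem_insert_of_mem hj)
        (fun haj => hnot (haj ▸ hj))
    · exact ih (fun i hi j hj hij =>
        hc i (Finset.mem_insert_of_mem hi) j (Finset.mem_insert_of_mem hj) hij)
        (fun i hi => h i (Finset.mem_insert_of_mem hi))

end PellAux

open PellAux

/-- Let `p₁, …, p_r` be distinct odd primes, `e₁, …, e_r ≥ 1`,
`N = ∏ pᵢ^{eᵢ}`, and `D ∈ ℤ/Nℤ` reducing to a non-square modulo every `pᵢ`. Let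
`L = lcm(p₁^{e₁−1}(p₁+1), …, p_r^{e_r−1}(p_r+1))` and let `E, d` be positive integers
with `E·d ≡ 1 (mod L)`. Then for every `(x,y)` on the Pell conic over `ℤ/Nℤ`,
`((x,y)^{⊗E})^{⊗d} = (x,y)`: decryption in the proposed scheme recovers the plaintext. -/
theorem pell_scheme_decryption (r : ℕ) (p e : Fin r → ℕ) (hp : ∀ i, (p i).Prime)
    (hp2 : ∀ i, p i ≠ 2) (hinj : Function.Injective p) (he : ∀ i, 1 ≤ e i)
    (D : ZMod (∏ i, p i ^ e i))
    (hD : ∀ i, ∀ c : ZMod (p i), c ^ 2 ≠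
      ZMod.castHom ((dvd_pow_self (p i) (Nat.one_le_iff_ne_zero.mp (he i))).trans
        (Finset.dvd_prod_of_mem (fun j => p j ^ e j) (Finset.mem_univ i))) (ZMod (p i)) D)
    (E d : ℕ) (hE : 0 < E) (hd : 0 < d)
    (hed : E * d ≡ 1 [MOD Finset.univ.lcm fun i => p i ^ (e i - 1) * (p i + 1)]) :
    ∀ P ∈ pellConic D, pellPow D (pellPow D P E) d = P := by
  intro P hP
  haveI hNz : NeZero (∏ i, p i ^ e i) :=
    ⟨Finset.prod_ne_zero_iff.mpr fun i _ => pow_ne_zero _ (hp i).pos.ne'⟩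
  set L := Finset.univ.lcm fun i => p i ^ (e i - 1) * (p i + 1) with hL
  have hdvd : ∀ i : Fin r, p i ^ e i ∣ ∏ i, p i ^ e i :=
    fun i => Finset.dvd_prod_of_mem _ (Finset.mem_univ i)
  have key : pellPow D P L = (1, 0) := by
    -- CRT: an element of `ZMod N` vanishing mod every `p i ^ e i` is zero
    have hzero : ∀ z : ZMod (∏ i, p i ^ e i),
        (∀ i, ZMod.castHom (hdvd i) (ZMod (p i ^ e i)) z = 0) → z = 0 := by
      intro z hz
      have hdv : ∀ i : Fin r, p i ^ e i ∣ z.val := by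
        intro i
        haveI : NeZero (p i ^ e i) := ⟨pow_ne_zero _ (hp i).pos.ne'⟩
        exact val_dvd_of_cast_eq_zero (hdvd i) z (hz i)
      have hNdvd : (∏ i, p i ^ e i) ∣ z.val := by
        refine nat_prod_dvd _ _ _ (fun i _ j _ hij => ?_) (fun i _ => hdv i)
        exact ((Nat.coprime_primes (hp i) (hp j)).mpr fun hpe => hij (hinj hpe)).pow _ _
      have hv0 : z.val = 0 := Nat.eq_zero_of_dvd_of_lt hNdvd (ZMod.val_lt z)
      have hzz : ((z.val : ℕ) : ZMod (∏ i, p i ^ e i)) = z := by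
        rw [ZMod.natCast_val, ZMod.cast_id]
      rw [← hzz, hv0, Nat.cast_zero]
    -- componentwise, via each prime power
    have hcomp : ∀ i : Fin r,
        (ZMod.castHom (hdvd i) (ZMod (p i ^ e i)) (pellPow D P L).1,
         ZMod.castHom (hdvd i) (ZMod (p i ^ e i)) (pellPow D P L).2)
          = ((1 : ZMod (p i ^ e i)), (0 : ZMod (p i ^ e i))) := by
      intro i
      set fi := ZMod.castHom (hdvd i) (ZMod (p i ^ e i)) with hfi
      rw [pellMap_pow fi D P L]
      -- hypotheses for the prime power lemma
      have hDi : ∀ c : ZMod (p i), c ^ 2 ≠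
          ZMod.castHom (dvd_pow_self (p i) (Nat.one_le_iff_ne_zero.mp (he i)))
            (ZMod (p i)) (fi D) := by
        intro c hc
        have hcc := RingHom.congr_fun
          (ZMod.castHom_comp (dvd_pow_self (p i) (Nat.one_le_iff_ne_zero.mp (he i)))
            (hdvd i)) D
        rw [RingHom.comp_apply] at hcc
        exact hD i c (hc.trans hcc)
      have hPi : (fi P.1, fi P.2) ∈ pellConic (fi D) := by
        have hP' : P.1 ^ 2 - D * P.2 ^ 2 = 1 := hP
        have := congrArg fi hP'
        rw [map_sub, map_mul, map_pow, map_pow, map_one] at this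
        exact this
      have hkill := prime_pow_case (p i) (e i) (hp i) (hp2 i) (he i) (fi D) hDi
        (fi P.1, fi P.2) hPi
      obtain ⟨t, ht⟩ : (p i ^ (e i - 1) * (p i + 1)) ∣ L :=
        Finset.dvd_lcm (Finset.mem_univ i)
      rw [ht, pellPow_mul, hkill, pellPow_oneZero]
    have hz1 : (pellPow D P L).1 = 1 := by
      refine sub_eq_zero.mp (hzero ((pellPow D P L).1 - 1) fun i => ?_)
      have h1 := congrArg Prod.fst (hcomp i)
      simp only [] at h1
      rw [map_sub, map_one, h1, sub_self]
    have hz2 : (pellPow D P L).2 = 0 := by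
      refine hzero (pellPow D P L).2 fun i => ?_
      exact congrArg Prod.snd (hcomp i)
    exact Prod.ext hz1 hz2
  obtain ⟨m, hm⟩ := (Nat.modEq_iff_dvd'
    (Nat.one_le_iff_ne_zero.mpr (Nat.mul_pos hE hd).ne')).mp hed.symm
  have hEd : E * d = 1 + L * m := by
    have h1 : 1 ≤ E * d := Nat.mul_pos hE hd
    omega
  rw [← pellPow_mul, hEd, pellPow_add, pellPow_one, pellPow_mul, key, pellPow_oneZero]
  simp [pellMul]
end
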